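/- arXiv:1506.05914 — 10 statements merged into one kernel-verified Lean document; each statement's English description precedes it below -/
import Mathlib

section
/- In k[x_0,x_1,x_2] with char k = 0, the five quintics x_0^5, x_1^5, x_2^5, x_0^3x_1x_2, x_0x_1^2x_2^2 are k-linearly dependent modulo the linear form x_0 + x_1 + x_2. -/
open MvPolynomial

theorem stmt_2 (k : Type*) [Field k] [CharZero k] :
    ∃ c : Fin 5 → k, c ≠ 0 ∧
      c 0 • (X 0 ^ 5 : MvPolynomial (Fin 3) k) + c 1 • X 1 ^ 5 + c 2 • X 2 ^ 5 +
        c 3 • (X 0 ^ 3 * X 1 * X 2) + c 4 • (X 0 * X 1 ^ 2 * X 2 ^ 2) ∈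
        Ideal.span {(X 0 + X 1 + X 2 : MvPolynomial (Fin 3) k)} := by
  refine ⟨![1, 1, 1, -5, 5], ?_, ?_⟩
  · intro h
    have := congrFun h 0
    simp at this
  · rw [Ideal.mem_span_singleton']
    refine ⟨(X 0 ^ 4 - X 0 ^ 3 * X 1 - X 0 ^ 3 * X 2 + X 0 ^ 2 * X 1 ^ 2
      - 3 * X 0 ^ 2 * X 1 * X 2 + X 0 ^ 2 * X 2 ^ 2 - X 0 * X 1 ^ 3
      + 2 * X 0 * X 1 ^ 2 * X 2 + 2 * X 0 * X 1 * X 2 ^ 2 - X 0 * X 2 ^ 3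
      + X 1 ^ 4 - X 1 ^ 3 * X 2 + X 1 ^ 2 * X 2 ^ 2 - X 1 * X 2 ^ 3 + X 2 ^ 4 :
      MvPolynomial (Fin 3) k), ?_⟩
    simp only [Matrix.cons_val_zero, Matrix.cons_val_one, Matrix.head_cons,
      Matrix.cons_val_two, Matrix.tail_cons, Matrix.cons_val_three,
      Matrix.cons_val_four, one_smul, neg_smul]
    rw [show ((5 : k) • (X 0 ^ 3 * X 1 * X 2 : MvPolynomial (Fin 3) k)) = 5 * (X 0 ^ 3 * X 1 * X 2) by
      rw [smul_eq_C_mul, map_ofNat],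
      show ((5 : k) • (X 0 * X 1 ^ 2 * X 2 ^ 2 : MvPolynomial (Fin 3) k)) = 5 * (X 0 * X 1 ^ 2 * X 2 ^ 2) by
      rw [smul_eq_C_mul, map_ofNat]]
    ring
end

section
/- In k[x_0,x_1,x_2] with char k = 0, the five quartics x_0^4, x_1^4, x_2^4, x_0x_1x_2^2, x_0^2x_1^2 are k-linearly dependent modulo the linear form x_0 + x_1 + x_2. -/
open MvPolynomial

theorem stmt_3 (k : Type*) [Field k] [CharZero k] :
    ∃ c : Fin 5 → k, c ≠ 0 ∧
      c 0 • (X 0 ^ 4 : MvPolynomial (Fin 3) k) + c 1 • X 1 ^ 4 + c 2 • X 2 ^ 4 +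
        c 3 • (X 0 * X 1 * X 2 ^ 2) + c 4 • (X 0 ^ 2 * X 1 ^ 2) ∈
        Ideal.span {(X 0 + X 1 + X 2 : MvPolynomial (Fin 3) k)} := by
  refine ⟨![-1, -1, 1, -4, 2], ?_, ?_⟩
  · intro h
    have := congrFun h 2
    simp at this
  · rw [Ideal.mem_span_singleton']
    refine ⟨(X 2 - X 0 - X 1) * (X 2 ^ 2 + (X 0 - X 1) ^ 2), ?_⟩
    simp only [Matrix.cons_val_zero, Matrix.cons_val_one, Matrix.head_cons,
      Matrix.cons_val_fin_one, smul_eq_C_mul]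
    show _ = C (-1 : k) * _ + C (-1 : k) * _ + C (1 : k) * _ + C (-4 : k) * _ + C (2 : k) * _
    push_cast [map_neg, map_one, map_ofNat]
    ring
end

section
/- In k[x_0,x_1,x_2] with char k = 0, the six quintics x_0^5, x_1^5, x_2^5, x_0^2x_1^2x_2, x_0^2x_1x_2^2, x_0x_1^2x_2^2 are k-linearly dependent modulo the linear form x_0 + x_1 + x_2. -/
open MvPolynomial

theorem stmt_5 (k : Type*) [Field k] [CharZero k] :
    ∃ c : Fin 6 → k, c ≠ 0 ∧
      c 0 • (X 0 ^ 5 : MvPolynomial (Fin 3) k) + c 1 • X 1 ^ 5 + c 2 • X 2 ^ 5 +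
        c 3 • (X 0 ^ 2 * X 1 ^ 2 * X 2) + c 4 • (X 0 ^ 2 * X 1 * X 2 ^ 2) +
        c 5 • (X 0 * X 1 ^ 2 * X 2 ^ 2) ∈
        Ideal.span {(X 0 + X 1 + X 2 : MvPolynomial (Fin 3) k)} := by
  refine ⟨![1, 1, 1, 5, 5, 5], ?_, ?_⟩
  · intro h
    have := congrFun h 0
    simp at this
  · rw [Ideal.mem_span_singleton]
    refine ⟨(X 2 ^ 4 - X 1 * X 2 ^ 3 + X 1 ^ 2 * X 2 ^ 2 - X 1 ^ 3 * X 2 + X 1 ^ 4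
      - X 0 * X 2 ^ 3 + 2 * X 0 * X 1 * X 2 ^ 2 + 2 * X 0 * X 1 ^ 2 * X 2 - X 0 * X 1 ^ 3
      + X 0 ^ 2 * X 2 ^ 2 + 2 * X 0 ^ 2 * X 1 * X 2 + X 0 ^ 2 * X 1 ^ 2
      - X 0 ^ 3 * X 2 - X 0 ^ 3 * X 1 + X 0 ^ 4 : MvPolynomial (Fin 3) k), ?_⟩
    have h5 : (![(1:k),1,1,5,5,5]) 5 = 5 := rfl
    show _ = _
    rw [h5]
    simp only [Matrix.cons_val_zero, Matrix.cons_val_one, Matrix.head_cons,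
      Matrix.cons_val_two, Matrix.tail_cons, Matrix.cons_val_three, Matrix.cons_val_four, Matrix.cons_val_succ,
      smul_eq_C_mul, map_one, map_ofNat]
    ring
end

section
/- Let d ≥ 4 and n ≥ 2, and let k have characteristic zero. For any exponent vector (a_0,…,a_n) with all a_i ≥ 0 and a_0 + ⋯ + a_n = d, the n+2 monomials x_0^d, x_1^d, …, x_n^d, x_0^{a_0}⋯x_n^{a_n} remain k-linearly independent modulo the linear form x_0 + x_1 + ⋯ + x_n. -/
open MvPolynomial

private lemma stmt7_sum3 {M ι : Type*} [AddCommMonoid M] [Fintype ι] [DecidableEq ι]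
    {i v w : ι} (hiv : i ≠ v) (hiw : i ≠ w) (hvw : v ≠ w) (g : ι → M)
    (hg : ∀ j, j ≠ i → j ≠ v → j ≠ w → g j = 0) : ∑ j, g j = g i + g v + g w := by
  rw [← Finset.sum_subset (Finset.subset_univ ({i, v, w} : Finset ι))
    (fun x _ hx => by
      simp only [Finset.mem_insert, Finset.mem_singleton, not_or] at hx
      exact hg x hx.1 hx.2.1 hx.2.2)]
  rw [Finset.sum_insert (by simp [hiv, hiw]), Finset.sum_insert (by simp [hvw]),
    Finset.sum_singleton, add_assoc]

private lemma stmt7_key {k : Type*} [Field k] {n d : ℕ} {a : Fin (n + 1) → ℕ}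
    {c : Fin (n + 1) → k} {c' : k}
    (h : (∑ i, c i • X i ^ d) + c' • (∏ i, X i ^ a i) ∈
      Ideal.span {(∑ i, X i : MvPolynomial (Fin (n + 1)) k)})
    (A : Type*) [CommRing A] [Algebra k A] (f : Fin (n + 1) → A) (hf : ∑ i, f i = 0) :
    (∑ i, c i • f i ^ d) + c' • ∏ i, f i ^ a i = 0 := by
  obtain ⟨g, hg⟩ := Ideal.mem_span_singleton.mp h
  have h2 := congrArg (MvPolynomial.aeval f) hg
  simpa [map_sum, map_prod, hf] using h2

theorem stmt_7 (k : Type*) [Field k] [CharZero k] (n d : ℕ) (hn : 2 ≤ n) (hd : 4 ≤ d)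
    (a : Fin (n + 1) → ℕ) (ha : ∑ i, a i = d)
    (hne : ∀ i, a ≠ fun j => if j = i then d else 0)
    (c : Fin (n + 1) → k) (c' : k)
    (h : (∑ i, c i • X i ^ d) + c' • (∏ i, X i ^ a i) ∈
      Ideal.span {(∑ i, X i : MvPolynomial (Fin (n + 1)) k)}) :
    (∀ i, c i = 0) ∧ c' = 0 := by
  classical
  have hd0 : d ≠ 0 := by omega
  have hdk : (d : k) ≠ 0 := Nat.cast_ne_zero.mpr hd0
  -- choose v maximizing a
  obtain ⟨v, -, hv⟩ := Finset.exists_max_image Finset.univ a Finset.univ_nonempty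
  -- binomial coefficient computation
  have hchoose : d.choose (d - 1) = d := by
    rw [← Nat.choose_symm (by omega : d - 1 ≤ d)]
    rw [show d - (d - 1) = 1 by omega, Nat.choose_one_right]
  have hnegpow : ∀ kk : ℕ, ((-(Polynomial.X + 1) : Polynomial k) ^ d).coeff kk
      = (-1) ^ d * (d.choose kk : k) := by
    intro kk
    rw [show (-(Polynomial.X + 1) : Polynomial k)
        = Polynomial.C (-1) * (Polynomial.X + Polynomial.C 1) by
      rw [map_neg, map_one]; ring]
    rw [mul_pow, ← Polynomial.C_pow, Polynomial.coeff_C_mul, Polynomial.coeff_X_add_C_pow]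
    rw [one_pow, one_mul]
  -- Step 1: c i = 0 for i ≠ v
  have step1 : ∀ i, i ≠ v → c i = 0 := by
    intro i hiv
    obtain ⟨w, hwmem, hwv⟩ := Finset.exists_mem_ne
      (s := Finset.univ.erase i)
      (by rw [Finset.card_erase_of_mem (Finset.mem_univ i)]; simp; omega) v
    have hwi : w ≠ i := (Finset.mem_erase.mp hwmem).1
    set f : Fin (n + 1) → Polynomial k := fun j =>
      if j = i then Polynomial.X else if j = v then 1 else
      if j = w then -(Polynomial.X + 1) else 0 with hfdef
    have hfi : f i = Polynomial.X := by simp [hfdef]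
    have hfv : f v = 1 := by simp [hfdef, hiv.symm]
    have hfw : f w = -(Polynomial.X + 1) := by simp [hfdef, hwi, hwv]
    have hf0 : ∀ j, j ≠ i → j ≠ v → j ≠ w → f j = 0 := by
      intro j h1 h2 h3; simp [hfdef, h1, h2, h3]
    have hf : ∑ j, f j = 0 := by
      rw [stmt7_sum3 hiv (Ne.symm hwi) hwv.symm f hf0, hfi, hfv, hfw]; ring
    have E := stmt7_key h (Polynomial k) f hf
    have hsum2 : ∑ j, c j • f j ^ d
        = c i • Polynomial.X ^ d + c v • 1 + c w • (-(Polynomial.X + 1)) ^ d := by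
      rw [stmt7_sum3 hiv (Ne.symm hwi) hwv.symm (fun j => c j • f j ^ d)
        (fun j h1 h2 h3 => by
          show c j • f j ^ d = 0
          rw [hf0 j h1 h2 h3, zero_pow hd0, smul_zero])]
      rw [hfi, hfv, hfw, one_pow]
    rw [hsum2] at E
    set m : Polynomial k := ∏ j, f j ^ a j with hmdef
    have hav_le : a v ≤ d := ha ▸ Finset.single_le_sum (fun j _ => Nat.zero_le (a j))
      (Finset.mem_univ v)
    have hm : m.coeff (d - 1) = 0 ∧ m.coeff d = 0 := by
      by_cases hA : 2 ≤ a v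
      · have hdeg : m.natDegree ≤ d - 2 := by
          calc m.natDegree ≤ ∑ j, (f j ^ a j).natDegree := Polynomial.natDegree_prod_le _ _
            _ ≤ ∑ j, (if j = v then 0 else a j) := by
                refine Finset.sum_le_sum fun j _ => ?_
                by_cases hj : j = v
                · subst hj; simp [hfv]
                · rw [if_neg hj]
                  refine le_trans (Polynomial.natDegree_pow_le) ?_
                  have : (f j).natDegree ≤ 1 := by
                    by_cases h1 : j = i
                    · subst h1; rw [hfi]; simp
                    · by_cases h3 : j = w
                      · subst h3; rw [hfw]
                        refine le_trans (Polynomial.natDegree_neg _).le ?_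
                        exact Polynomial.natDegree_add_le_of_degree_le
                          (by simp) (by simp)
                      · rw [hf0 j h1 hj h3]; simp
                  calc a j * (f j).natDegree ≤ a j * 1 := Nat.mul_le_mul_left _ this
                    _ = a j := Nat.mul_one _
            _ ≤ d - 2 := by
                have h1 : ∑ j, (if j = v then a j else (0 : ℕ)) = a v := by simp
                have key2 : a v + ∑ j, (if j = v then (0 : ℕ) else a j) = d := by
                  rw [← ha, ← h1, ← Finset.sum_add_distrib]
                  exact Finset.sum_congr rfl fun j _ => by
                    by_cases hj : j = v <;> simp [hj]
                omega
        constructor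
        · exact Polynomial.coeff_eq_zero_of_natDegree_lt (by omega)
        · exact Polynomial.coeff_eq_zero_of_natDegree_lt (by omega)
      · have hall : ∀ j, a j ≤ 1 := fun j =>
          le_trans (hv j (Finset.mem_univ j)) (by omega)
        obtain ⟨j₀, hj₀mem, hj₀⟩ : ∃ j₀, j₀ ∉ ({i, v, w} : Finset (Fin (n + 1))) ∧ a j₀ ≠ 0 := by
          by_contra hc
          push_neg at hc
          have h2 : ∑ j, a j = ∑ j ∈ ({i, v, w} : Finset (Fin (n + 1))), a j :=
            (Finset.sum_subset (Finset.subset_univ _) (fun x _ hx => hc x hx)).symm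
          have h3 : ∑ j ∈ ({i, v, w} : Finset (Fin (n + 1))), a j ≤ 3 := by
            calc ∑ j ∈ ({i, v, w} : Finset (Fin (n + 1))), a j
                ≤ ∑ _j ∈ ({i, v, w} : Finset (Fin (n + 1))), 1 :=
                  Finset.sum_le_sum fun j _ => hall j
              _ ≤ 3 := by
                  rw [Finset.sum_const, smul_eq_mul, mul_one]
                  calc ({i, v, w} : Finset (Fin (n + 1))).card
                      ≤ ({v, w} : Finset (Fin (n + 1))).card + 1 := Finset.card_insert_le _ _
                    _ ≤ (({w} : Finset (Fin (n + 1))).card + 1) + 1 := by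
                        exact Nat.add_le_add_right (Finset.card_insert_le _ _) 1
                    _ = 3 := by simp
          omega
        have hmz : m = 0 := by
          refine Finset.prod_eq_zero (Finset.mem_univ j₀) ?_
          simp only [Finset.mem_insert, Finset.mem_singleton, not_or] at hj₀mem
          rw [hf0 j₀ hj₀mem.1 hj₀mem.2.1 hj₀mem.2.2]
          exact zero_pow hj₀
        rw [hmz]; simp
    have e1 : (Polynomial.X ^ d : Polynomial k).coeff (d - 1) = 0 := by
      rw [Polynomial.coeff_X_pow]; exact if_neg (by omega)
    have e1' : (Polynomial.X ^ d : Polynomial k).coeff d = 1 := by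
      rw [Polynomial.coeff_X_pow]; exact if_pos rfl
    have e2 : (1 : Polynomial k).coeff (d - 1) = 0 := by
      rw [Polynomial.coeff_one]; exact if_neg (by omega)
    have e2' : (1 : Polynomial k).coeff d = 0 := by
      rw [Polynomial.coeff_one]; exact if_neg (by omega)
    have e3 : ((-(Polynomial.X + 1) : Polynomial k) ^ d).coeff (d - 1) = (-1) ^ d * d := by
      rw [hnegpow, hchoose]
    have e3' : ((-(Polynomial.X + 1) : Polynomial k) ^ d).coeff d = (-1) ^ d := by
      rw [hnegpow, Nat.choose_self, Nat.cast_one, mul_one]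
    have hcw : c w = 0 := by
      have h1 := congrArg (fun p => Polynomial.coeff p (d - 1)) E
      simp only [Polynomial.coeff_add, Polynomial.coeff_smul, Polynomial.coeff_zero,
        smul_eq_mul, e1, e2, e3, hm.1, mul_zero, mul_one, zero_add, add_zero] at h1
      have hne1 : ((-1 : k) ^ d * (d : k)) ≠ 0 :=
        mul_ne_zero (pow_ne_zero _ (by norm_num)) hdk
      exact (mul_eq_zero.mp h1).resolve_right hne1
    have h2 := congrArg (fun p => Polynomial.coeff p d) E
    simp only [Polynomial.coeff_add, Polynomial.coeff_smul, Polynomial.coeff_zero,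
      smul_eq_mul, e1', e2', e3', hm.2, hcw, mul_zero, mul_one, zero_mul,
      zero_add, add_zero] at h2
    exact h2
  -- Step 2: c v = 0
  have ht : ∃ t, t ≠ v ∧ a t ≠ 0 := by
    by_contra hc
    push_neg at hc
    refine hne v (funext fun j => ?_)
    by_cases hj : j = v
    · subst hj
      rw [if_pos rfl, ← ha, Finset.sum_eq_single j (fun b _ hb => hc b hb) (by simp)]
    · rw [if_neg hj]; exact hc j hj
  obtain ⟨t, htv, hta⟩ := ht
  have step2 : c v = 0 := by
    obtain ⟨w, hwmem, hwv⟩ := Finset.exists_mem_ne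
      (s := Finset.univ.erase t)
      (by rw [Finset.card_erase_of_mem (Finset.mem_univ t)]; simp; omega) v
    have hwt : w ≠ t := (Finset.mem_erase.mp hwmem).1
    set p : Fin (n + 1) → k := fun j => if j = v then 1 else if j = w then -1 else 0
      with hpdef
    have hp : ∑ j, p j = 0 := by
      rw [← Finset.sum_subset (Finset.subset_univ ({v, w} : Finset (Fin (n + 1))))
        (fun x _ hx => by
          simp only [Finset.mem_insert, Finset.mem_singleton, not_or] at hx
          simp [hpdef, hx.1, hx.2])]
      rw [Finset.sum_pair (Ne.symm hwv)]
      simp [hpdef, hwv]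
    have E := stmt7_key h k p hp
    have hprod : ∏ j, p j ^ a j = 0 := by
      refine Finset.prod_eq_zero (Finset.mem_univ t) ?_
      rw [show p t = 0 by simp [hpdef, htv, Ne.symm hwt]]
      exact zero_pow hta
    rw [hprod, smul_zero, add_zero,
      Finset.sum_eq_single v (fun b _ hb => by rw [step1 b hb, zero_smul]) (by simp)] at E
    rw [show p v = 1 by simp [hpdef]] at E
    simpa using E
  -- Step 3: c' = 0
  have hcall : ∀ i, c i = 0 := by
    intro i
    by_cases hi : i = v
    · subst hi; exact step2
    · exact step1 i hi
  refine ⟨hcall, ?_⟩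
  set q : Fin (n + 1) → k := fun j => if j = v then -(n : k) else 1 with hqdef
  have hq : ∑ j, q j = 0 := by
    rw [← Finset.add_sum_erase _ q (Finset.mem_univ v)]
    rw [Finset.sum_congr rfl (fun j hj => by
      simp [hqdef, (Finset.mem_erase.mp hj).1] : ∀ j ∈ Finset.univ.erase v, q j = 1)]
    rw [Finset.sum_const, Finset.card_erase_of_mem (Finset.mem_univ v)]
    simp [hqdef]
  have E := stmt7_key h k q hq
  rw [Finset.sum_eq_zero (fun j _ => by rw [hcall j, zero_smul]), zero_add] at E
  have hprod : ∏ j, q j ^ a j = (-(n : k)) ^ a v := by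
    rw [Finset.prod_eq_single v (fun b _ hb => by simp [hqdef, hb]) (by simp)]
    simp [hqdef]
  rw [hprod, smul_eq_mul] at E
  have hne0 : (-(n : k)) ^ a v ≠ 0 :=
    pow_ne_zero _ (neg_ne_zero.mpr (Nat.cast_ne_zero.mpr (by omega)))
  exact (mul_eq_zero.mp E).resolve_right hne0
end

section
/- Let d ≥ 4, n ≥ 2, and char k = 0. Any collection of monomials of degree d of the form x_0^d, x_1^d, …, x_n^d, m_1, …, m_{n-1} (with the m_j arbitrary degree-d monomials), totaling 2n monomials, is k-linearly independent modulo the linear form x_0 + x_1 + ⋯ + x_n. -/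
/-!
A nonzero multiple of `L_S = ∑_{j ∈ S} X j` has at least `#S` terms: split off the largest power
of `X i` dividing the cofactor; setting `X i = 0` then leaves a nonzero multiple of `L_{S \ {i}}`,
while the top `X i`-degree part contributes one more term.

Now let `F` be homogeneous of degree `d ≥ 4` in the variables `S`, divisible by `L_S`, whose
monomials are pure powers `X l ^ d` and at most `#S - 2` mixed monomials. Induct on `#S`.
For `#S = 3` there is at most one mixed monomial `x^p y^q z^r`; naming the variables so that `r`
is the smallest exponent and substituting `(x, y, z) = (X, 1, -X - 1)` leaves a univariate
identity in which the binomial coefficients force every coefficient to vanish. For `#S ≥ 4`,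
setting `X i = 0` for a variable that at most `#S - 3` mixed monomials avoid gives a smaller
instance, so every monomial of `F` avoiding `X i` has coefficient `0`. Every pure power `X l ^ d`
avoids some such variable `X i` with `i ≠ l` (take `i` in the support of a mixed monomial), so
`F` has at most `#S - 2` terms and vanishes by the term count.
-/

open MvPolynomial Finset

namespace Polynomial

variable {R : Type*} [CommRing R] [IsDomain R] [CharZero R]

theorem eq_zero_of_C_mul_X_pow_add_C_add_C_mul_X_add_one_pow {d p q r : ℕ} (hd : 4 ≤ d)
    (hsum : p + q + r = d) (hp : 1 ≤ p) (hq : 1 ≤ q) (hrp : r ≤ p) (hrq : r ≤ q) {c₁ c₂ γ δ : R}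
    (h : C c₁ * X ^ d + C c₂ + C γ * (X + 1) ^ d + C δ * (X ^ p * (X + 1) ^ r) = 0) :
    c₁ = 0 ∧ c₂ = 0 ∧ γ = 0 ∧ δ = 0 := by
  have hcoeff (t : ℕ) : ((if t = d then c₁ else 0) + if t = 0 then c₂ else 0) + γ * d.choose t
      + δ * (if p ≤ t then (r.choose (t - p) : R) else 0) = 0 := by
    simpa [coeff_X_pow, coeff_C, coeff_X_add_one_pow, coeff_X_pow_mul', eq_comm] using
      congr_arg (coeff · t) h
  have hγ : γ = 0 := by
    -- `X ^ p * (X + 1) ^ r` misses `X ^ 1` if `p ≥ 2`, and `X ^ (d - 1)` if `q ≥ 2`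
    obtain ⟨t, ht0, htd, htr⟩ : ∃ t, 0 < t ∧ t < d ∧ (p ≤ t → r < t - p) := by
      rcases le_or_gt 2 p with hp2 | hp2
      · exact ⟨1, by omega, by omega, by omega⟩
      · exact ⟨d - 1, by omega, by omega, by omega⟩
    have hδt : (if p ≤ t then (r.choose (t - p) : R) else 0) = 0 := by
      split_ifs with hpt
      · rw [Nat.choose_eq_zero_of_lt (htr hpt), Nat.cast_zero]
      · rfl
    have hchoose : (d.choose t : R) ≠ 0 := Nat.cast_ne_zero.2 (Nat.choose_pos htd.le).ne'
    have := hcoeff t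
    rw [if_neg htd.ne, if_neg ht0.ne', hδt] at this
    simpa [hchoose] using this
  have hδ : δ = 0 := by
    simpa [hγ, (show p ≠ d by omega), (show p ≠ 0 by omega)] using hcoeff p
  have hc₂ : c₂ = 0 := by simpa [hγ, hδ, (show 0 ≠ d by omega)] using hcoeff 0
  have hc₁ : c₁ = 0 := by simpa [hγ, hδ, (show d ≠ 0 by omega)] using hcoeff d
  exact ⟨hc₁, hc₂, hγ, hδ⟩

end Polynomial

namespace MvPolynomial

variable {σ R : Type*}

section CommSemiring

variable [CommSemiring R]

theorem card_support_X_pow_mul (i : σ) (m : ℕ) (p : MvPolynomial σ R) :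
    #(X i ^ m * p).support = #p.support := by
  induction m with
  | zero => simp
  | succ m ih => rw [pow_succ', mul_assoc, support_X_mul, card_map, ih]

def mixedSupport (p : MvPolynomial σ R) : Finset (σ →₀ ℕ) :=
  {ν ∈ p.support | 2 ≤ #ν.support}

theorem mem_mixedSupport {p : MvPolynomial σ R} {ν : σ →₀ ℕ} :
    ν ∈ p.mixedSupport ↔ ν ∈ p.support ∧ 2 ≤ #ν.support :=
  mem_filter

theorem exists_eq_single_of_mem_support {d : ℕ} (hd : d ≠ 0) {S : Finset σ}
    {F : MvPolynomial σ R} (hF : F.IsHomogeneous d) (hvars : F.vars ⊆ S) {ν : σ →₀ ℕ}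
    (hν : ν ∈ F.support) (hmixed : ν ∉ F.mixedSupport) : ∃ l ∈ S, ν = Finsupp.single l d := by
  have hdeg : ν.degree = d := by
    by_contra h
    exact mem_support_iff.1 hν (hF.coeff_eq_zero h)
  have hcard : #ν.support = 1 := by
    have : ν.support.Nonempty :=
      Finsupp.support_nonempty_iff.2 (by rintro rfl; simp at hdeg; omega)
    have := this.card_pos
    simp only [mem_mixedSupport, hν, true_and, not_le] at hmixed
    omega
  obtain ⟨l, c, hc, rfl⟩ := Finsupp.card_support_eq_one'.1 hcard
  rw [Finsupp.degree_single] at hdeg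
  subst hdeg
  exact ⟨l, hvars ((mem_vars_iff_mem_support l).2 ⟨_, hν, by simp [hc]⟩), rfl⟩

variable [DecidableEq σ]

noncomputable def killVar (i : σ) : MvPolynomial σ R →ₐ[R] MvPolynomial σ R :=
  aeval fun j => if j = i then 0 else X j

theorem killVar_monomial (i : σ) (s : σ →₀ ℕ) (c : R) :
    killVar i (monomial s c) = if s i = 0 then monomial s c else 0 := by
  rw [killVar, aeval_monomial, monomial_eq]
  split_ifs with h
  · congr 1
    refine Finsupp.prod_congr fun j hj => ?_
    rw [if_neg (by rintro rfl; exact Finsupp.mem_support_iff.1 hj h)]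
  · rw [Finsupp.prod, prod_eq_zero (Finsupp.mem_support_iff.2 h) (by simp [zero_pow h]),
      mul_zero]

theorem coeff_killVar (i : σ) (p : MvPolynomial σ R) (ν : σ →₀ ℕ) :
    coeff ν (killVar i p) = if ν i = 0 then coeff ν p else 0 := by
  induction p using MvPolynomial.induction_on' with
  | monomial s c =>
    rw [killVar_monomial]
    by_cases hs : s = ν
    · subst hs
      split_ifs <;> simp
    · split_ifs <;> simp [coeff_monomial, hs]
  | add p q hp hq =>
    rw [map_add, coeff_add, coeff_add, hp, hq]
    split_ifs <;> simp

theorem mem_support_killVar {i : σ} {p : MvPolynomial σ R} {ν : σ →₀ ℕ} :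
    ν ∈ (killVar i p).support ↔ ν ∈ p.support ∧ ν i = 0 := by
  simp only [mem_support_iff, coeff_killVar]
  split_ifs with h <;> simp [h]

theorem killVar_sum_X {i : σ} {S : Finset σ} (hi : i ∈ S) :
    killVar i (∑ j ∈ S, X j : MvPolynomial σ R) = ∑ j ∈ S.erase i, X j := by
  rw [map_sum, ← add_sum_erase S _ hi]
  simp only [killVar, aeval_X, if_pos, zero_add]
  exact sum_congr rfl fun j hj => if_neg (ne_of_mem_erase hj)

theorem X_dvd_of_killVar_eq_zero {i : σ} {p : MvPolynomial σ R} (h : killVar i p = 0) :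
    X i ∣ p := by
  rw [X_dvd_iff_modMonomial_eq_zero]
  ext ν
  by_cases hν : Finsupp.single i 1 ≤ ν
  · rw [coeff_modMonomial_of_le _ hν, coeff_zero]
  · have hνi : ν i = 0 := by simpa [Finsupp.single_le_iff] using hν
    simpa [coeff_modMonomial_of_not_le _ hν, h, hνi] using (coeff_killVar i p ν).symm

theorem mixedSupport_killVar (i : σ) (p : MvPolynomial σ R) :
    (killVar i p).mixedSupport = {ν ∈ p.mixedSupport | ν i = 0} := by
  ext ν
  simp only [mem_filter, mem_mixedSupport, mem_support_killVar]
  tauto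

theorem vars_killVar_subset (i : σ) (p : MvPolynomial σ R) :
    (killVar i p).vars ⊆ p.vars.erase i := by
  intro j hj
  obtain ⟨ν, hν, hjν⟩ := (mem_vars_iff_mem_support j).1 hj
  rw [mem_support_killVar] at hν
  exact mem_erase.2 ⟨by rintro rfl; exact Finsupp.mem_support_iff.1 hjν hν.2,
    (mem_vars_iff_mem_support j).2 ⟨ν, hν.1, hjν⟩⟩

theorem IsHomogeneous.killVar {p : MvPolynomial σ R} {n : ℕ} (hp : p.IsHomogeneous n) (i : σ) :
    (killVar i p).IsHomogeneous n := by
  have hX (j : σ) : (if j = i then 0 else X j : MvPolynomial σ R).IsHomogeneous 1 := by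
    split_ifs
    exacts [isHomogeneous_zero _ _ 1, isHomogeneous_X R j]
  have := hp.aeval _ hX
  rwa [one_mul] at this

end CommSemiring

section IsDomain

variable [CommRing R] [IsDomain R] [DecidableEq σ]

theorem exists_eq_X_pow_mul_killVar_ne_zero (i : σ) {p : MvPolynomial σ R} (hp : p ≠ 0) :
    ∃ m q, p = X i ^ m * q ∧ killVar i q ≠ 0 := by
  induction hn : degreeOf i p using Nat.strong_induction_on generalizing p with
  | _ n ih =>
  by_cases h : killVar i p = 0
  · obtain ⟨q, rfl⟩ := X_dvd_of_killVar_eq_zero h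
    have hq : q ≠ 0 := right_ne_zero_of_mul hp
    have hdeg : degreeOf i q < n := by
      rw [← hn, degreeOf_mul_eq (X_ne_zero i) hq, degreeOf_X, if_pos rfl]
      omega
    obtain ⟨m, r, rfl, hr⟩ := ih _ hdeg hq rfl
    exact ⟨m + 1, r, by ring, hr⟩
  · exact ⟨0, p, by simp, h⟩

theorem exists_mem_support_sum_X_mul {i : σ} {S : Finset σ} (hi : i ∈ S) {q : MvPolynomial σ R}
    (hq : q ≠ 0) : ∃ ν ∈ ((∑ j ∈ S, X j) * q).support, ν i ≠ 0 := by
  have hL : Finsupp.single i 1 ∈ (∑ j ∈ S, X j : MvPolynomial σ R).support := by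
    simp [coeff_sum, coeff_X, Finsupp.single_left_inj, hi]
  have hdeg : 1 ≤ degreeOf i ((∑ j ∈ S, X j) * q) := by
    rw [degreeOf_mul_eq (by rintro h; simp [h] at hL) hq]
    have := monomial_le_degreeOf i hL
    simp only [Finsupp.single_eq_same] at this
    omega
  by_contra! h
  have := degreeOf_le_iff.2 fun ν hν => (h ν hν).le
  omega

theorem card_le_card_support_sum_X_mul (S : Finset σ) {q : MvPolynomial σ R} (hq : q ≠ 0) :
    #S ≤ #((∑ j ∈ S, X j) * q).support := by
  induction S using Finset.induction_on generalizing q with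
  | empty => simp
  | insert i S hi ih =>
    obtain ⟨m, q, rfl, hkill⟩ := exists_eq_X_pow_mul_killVar_ne_zero i hq
    rw [mul_left_comm, card_support_X_pow_mul]
    set P := (∑ j ∈ insert i S, X j) * q
    have hP : killVar i P = (∑ j ∈ S, X j) * killVar i q := by
      rw [map_mul, killVar_sum_X (mem_insert_self i S), erase_insert hi]
    obtain ⟨ν, hνP, hνi⟩ := exists_mem_support_sum_X_mul (q := q) (mem_insert_self i S)
      (by rintro rfl; exact hkill (map_zero _))
    have hsub : (killVar i P).support ⊆ P.support.erase ν := fun μ hμ => by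
      rw [mem_support_killVar] at hμ
      exact mem_erase.2 ⟨by rintro rfl; exact hνi hμ.2, hμ.1⟩
    calc #(insert i S) = #S + 1 := card_insert_of_notMem hi
      _ ≤ #(killVar i P).support + 1 := by rw [hP]; exact Nat.add_le_add_right (ih hkill) 1
      _ ≤ #(P.support.erase ν) + 1 := Nat.add_le_add_right (card_le_card hsub) 1
      _ = #P.support := card_erase_add_one hνP

end IsDomain

theorem exists_mem_ne_card_filter_apply_eq_zero [DecidableEq σ] {S : Finset σ}
    {A : Finset (σ →₀ ℕ)} (hA : ∀ a ∈ A, a.support ⊆ S ∧ 2 ≤ #a.support) (hS : 4 ≤ #S)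
    (hAS : #A + 2 ≤ #S) (l : σ) : ∃ i ∈ S, i ≠ l ∧ #{a ∈ A | a i = 0} + 3 ≤ #S := by
  rcases A.eq_empty_or_nonempty with rfl | ⟨a₀, ha₀⟩
  · obtain ⟨i, hi⟩ : (S.erase l).Nonempty := by
      have := pred_card_le_card_erase (s := S) (a := l)
      rw [← card_pos]
      omega
    exact ⟨i, mem_of_mem_erase hi, ne_of_mem_erase hi, by simp; omega⟩
  · obtain ⟨i, hi⟩ : (a₀.support.erase l).Nonempty := by
      have := pred_card_le_card_erase (s := a₀.support) (a := l)
      have := (hA a₀ ha₀).2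
      rw [← card_pos]
      omega
    have hsub : {a ∈ A | a i = 0} ⊆ A.erase a₀ := fun a ha => by
      rw [mem_filter] at ha
      refine mem_erase.2 ⟨?_, ha.1⟩
      rintro rfl
      exact Finsupp.mem_support_iff.1 (mem_of_mem_erase hi) ha.2
    refine ⟨i, (hA a₀ ha₀).1 (mem_of_mem_erase hi), ne_of_mem_erase hi, ?_⟩
    have := card_le_card hsub
    rw [card_erase_of_mem ha₀] at this
    have := card_pos.2 ⟨a₀, ha₀⟩
    omega

theorem exists_eq_triple_of_two_le_card_support [DecidableEq σ] {S : Finset σ} (hS : #S = 3)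
    {a : σ →₀ ℕ} (haS : a.support ⊆ S) (ha : 2 ≤ #a.support) :
    ∃ x y z, x ≠ y ∧ x ≠ z ∧ y ≠ z ∧ S = {x, y, z} ∧
      1 ≤ a x ∧ 1 ≤ a y ∧ a z ≤ a x ∧ a z ≤ a y := by
  obtain ⟨z, hzS, hzmin⟩ := S.exists_min_image a (card_pos.1 (by omega))
  obtain ⟨x, y, hxy, hxy_eq⟩ :=
    card_eq_two.1 (by rw [card_erase_of_mem hzS, hS] : #(S.erase z) = 2)
  have hxS : x ∈ S.erase z := by simp [hxy_eq]
  have hyS : y ∈ S.erase z := by simp [hxy_eq]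
  have hpos (u : σ) (hu : u ∈ S.erase z) : 1 ≤ a u := by
    by_contra! h
    have hz : a z = 0 := by have := hzmin u (mem_of_mem_erase hu); omega
    have hsub : a.support ⊆ (S.erase z).erase u := fun j hj => by
      simp only [mem_erase]
      refine ⟨?_, ?_, haS hj⟩ <;> rintro rfl <;> simp_all
    have := card_le_card hsub
    rw [card_erase_of_mem hu, card_erase_of_mem hzS, hS] at this
    omega
  refine ⟨x, y, z, hxy, ne_of_mem_erase hxS, ne_of_mem_erase hyS, ?_, hpos x hxS, hpos y hyS,
    hzmin x (mem_of_mem_erase hxS), hzmin y (mem_of_mem_erase hyS)⟩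
  rw [← insert_erase hzS, hxy_eq]
  ext
  simp only [mem_insert, mem_singleton]
  tauto

section CharZero

variable [CommRing R] [IsDomain R] [CharZero R] [DecidableEq σ]

theorem coeff_eq_zero_of_sum_X_dvd_three {x y z : σ} (hxy : x ≠ y) (hxz : x ≠ z) (hyz : y ≠ z)
    {d : ℕ} (hd : 4 ≤ d) {a : σ →₀ ℕ} (ha : a.support ⊆ {x, y, z}) (hdeg : a.degree = d)
    (hx : 1 ≤ a x) (hy : 1 ≤ a y) (hzx : a z ≤ a x) (hzy : a z ≤ a y) {c₁ c₂ c₃ β : R}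
    (hdvd : (∑ j ∈ {x, y, z}, X j) ∣ monomial (Finsupp.single x d) c₁ +
      monomial (Finsupp.single y d) c₂ + monomial (Finsupp.single z d) c₃ + monomial a β) :
    c₁ = 0 ∧ c₂ = 0 ∧ c₃ = 0 ∧ β = 0 := by
  have hsum : a x + a y + a z = d := by
    rw [← hdeg, Finsupp.degree_apply, sum_subset ha fun j _ hj => Finsupp.notMem_support_iff.1 hj,
      sum_insert (by simp [hxy, hxz]), sum_insert (by simp [hyz]), sum_singleton, add_assoc]
  let g : σ → Polynomial R := fun j => if j = x then .X else if j = y then 1 else -(.X + 1)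
  have haeval (ν : σ →₀ ℕ) (hν : ν.support ⊆ {x, y, z}) (c : R) :
      aeval g (monomial ν c) = .C c * (.X ^ ν x * (-(.X + 1)) ^ ν z) := by
    rw [aeval_monomial, Finsupp.prod_of_support_subset ν hν _ (by simp),
      prod_insert (by simp [hxy, hxz]), prod_insert (by simp [hyz]), prod_singleton]
    simp [g, hxy.symm, hxz.symm, hyz.symm, Polynomial.algebraMap_eq]
  have hsingle (l : σ) (hl : l ∈ ({x, y, z} : Finset σ)) :
      (Finsupp.single l d).support ⊆ {x, y, z} :=
    Finsupp.support_single_subset.trans (singleton_subset_iff.2 hl)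
  have key := map_dvd (aeval g) hdvd
  simp only [map_sum, map_add, aeval_X, haeval _ (hsingle x (by simp)),
    haeval _ (hsingle y (by simp)), haeval _ (hsingle z (by simp)), haeval a ha] at key
  simp only [sum_insert (show x ∉ ({y, z} : Finset σ) by simp [hxy, hxz]), sum_pair hyz, g,
    if_pos, if_neg hxy.symm, if_neg hxz.symm, if_neg hyz.symm, Finsupp.single_eq_same,
    Finsupp.single_eq_of_ne hxy, Finsupp.single_eq_of_ne' hxz, Finsupp.single_eq_of_ne hxz,
    Finsupp.single_eq_of_ne' hyz, pow_zero, one_mul, mul_one,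
    neg_pow (Polynomial.X + 1 : Polynomial R),
    show (.X + (1 + -(.X + 1)) : Polynomial R) = 0 by ring, zero_dvd_iff] at key
  obtain ⟨h₁, h₂, h₃, h₄⟩ := Polynomial.eq_zero_of_C_mul_X_pow_add_C_add_C_mul_X_add_one_pow hd
    hsum hx hy hzx hzy (c₁ := c₁) (c₂ := c₂) (γ := c₃ * (-1) ^ d) (δ := β * (-1) ^ a z)
    (by simp only [map_mul, map_pow, map_neg, map_one]; linear_combination key)
  have hsign (n : ℕ) : ((-1) ^ n : R) ≠ 0 := pow_ne_zero _ (neg_ne_zero.2 one_ne_zero)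
  exact ⟨h₁, h₂, (mul_eq_zero.1 h₃).resolve_right (hsign d),
    (mul_eq_zero.1 h₄).resolve_right (hsign _)⟩

theorem eq_zero_of_sum_X_dvd_of_support_subset {x y z : σ} (hxy : x ≠ y) (hxz : x ≠ z)
    (hyz : y ≠ z) {d : ℕ} (hd : 4 ≤ d) {a : σ →₀ ℕ} (ha : a.support ⊆ {x, y, z})
    (hdeg : a.degree = d) (hx : 1 ≤ a x) (hy : 1 ≤ a y) (hzx : a z ≤ a x) (hzy : a z ≤ a y)
    {F : MvPolynomial σ R}
    (hF : F.support ⊆ {Finsupp.single x d, Finsupp.single y d, Finsupp.single z d, a})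
    (hdvd : (∑ j ∈ {x, y, z}, X j) ∣ F) : F = 0 := by
  have hdistinct : Finsupp.single x d ∉ ({Finsupp.single y d, Finsupp.single z d, a} : Finset _) ∧
      Finsupp.single y d ∉ ({Finsupp.single z d, a} : Finset _) ∧ Finsupp.single z d ≠ a := by
    simp only [mem_insert, mem_singleton, not_or]
    refine ⟨⟨?_, ?_, ?_⟩, ⟨?_, ?_⟩, ?_⟩ <;> intro h <;>
      have h₁ := DFunLike.congr_fun h x <;> have h₂ := DFunLike.congr_fun h y <;>
      simp [hxy, hxz, hyz, hxy.symm] at h₁ h₂ <;> omega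
  have hFsum : F = monomial (Finsupp.single x d) (coeff (Finsupp.single x d) F) +
      monomial (Finsupp.single y d) (coeff (Finsupp.single y d) F) +
      monomial (Finsupp.single z d) (coeff (Finsupp.single z d) F) + monomial a (coeff a F) := by
    conv_lhs => rw [F.as_sum]
    rw [sum_subset hF fun ν _ hν => by rw [notMem_support_iff.1 hν, monomial_zero],
      sum_insert hdistinct.1, sum_insert hdistinct.2.1, sum_pair hdistinct.2.2]
    abel
  obtain ⟨h₁, h₂, h₃, h₄⟩ :=
    coeff_eq_zero_of_sum_X_dvd_three hxy hxz hyz hd ha hdeg hx hy hzx hzy (hFsum ▸ hdvd)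
  rw [hFsum, h₁, h₂, h₃, h₄]
  simp

theorem eq_zero_of_sum_X_dvd_of_card_eq_three {d : ℕ} (hd : 4 ≤ d) {S : Finset σ} (hS : #S = 3)
    {F : MvPolynomial σ R} (hF : F.IsHomogeneous d) (hvars : F.vars ⊆ S)
    (hmixed : #F.mixedSupport ≤ 1) (hdvd : (∑ j ∈ S, X j) ∣ F) : F = 0 := by
  have hsupp (x y z : σ) (hS' : S = {x, y, z}) (a : σ →₀ ℕ) (hA : F.mixedSupport ⊆ {a}) :
      F.support ⊆ {Finsupp.single x d, Finsupp.single y d, Finsupp.single z d, a} := by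
    intro ν hν
    by_cases hνA : ν ∈ F.mixedSupport
    · simp [mem_singleton.1 (hA hνA)]
    · obtain ⟨l, hl, rfl⟩ := exists_eq_single_of_mem_support (by omega) hF hvars hν hνA
      rw [hS'] at hl
      simp only [mem_insert, mem_singleton] at hl ⊢
      tauto
  rcases F.mixedSupport.eq_empty_or_nonempty with hA | ⟨a, ha⟩
  · obtain ⟨x, y, z, hxy, hxz, hyz, rfl⟩ := card_eq_three.1 hS
    let a := Finsupp.single x (d - 1) + Finsupp.single y 1
    have ha : a.support ⊆ {x, y, z} := Finsupp.support_add.trans <| union_subset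
      (Finsupp.support_single_subset.trans (by simp))
      (Finsupp.support_single_subset.trans (by simp))
    have hdeg : a.degree = d := by
      rw [map_add, Finsupp.degree_single, Finsupp.degree_single]
      omega
    refine eq_zero_of_sum_X_dvd_of_support_subset hxy hxz hyz hd ha hdeg ?_ ?_ ?_ ?_
      (hsupp x y z rfl a (by simp [hA])) hdvd <;>
      simp [a, hxy, hxy.symm, hxz.symm, hyz.symm]
    omega
  · obtain ⟨haF, ha2⟩ := mem_mixedSupport.1 ha
    have haS : a.support ⊆ S := fun j hj => hvars ((mem_vars_iff_mem_support j).2 ⟨a, haF, hj⟩)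
    have hdeg : a.degree = d := by
      by_contra h
      exact mem_support_iff.1 haF (hF.coeff_eq_zero h)
    obtain ⟨x, y, z, hxy, hxz, hyz, rfl, hx, hy, hzx, hzy⟩ :=
      exists_eq_triple_of_two_le_card_support hS haS ha2
    exact eq_zero_of_sum_X_dvd_of_support_subset hxy hxz hyz hd haS hdeg hx hy hzx hzy
      (hsupp x y z rfl a fun b hb => mem_singleton.2 (card_le_one.1 hmixed b hb a ha)) hdvd

theorem eq_zero_of_sum_X_dvd {d : ℕ} (hd : 4 ≤ d) {S : Finset σ} (hS : 3 ≤ #S)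
    {F : MvPolynomial σ R} (hF : F.IsHomogeneous d) (hvars : F.vars ⊆ S)
    (hmixed : #F.mixedSupport + 2 ≤ #S) (hdvd : (∑ j ∈ S, X j) ∣ F) : F = 0 := by
  induction hM : #S using Nat.strong_induction_on generalizing S F with
  | _ M ih =>
  obtain hS3 | hS4 := hS.eq_or_lt
  · exact eq_zero_of_sum_X_dvd_of_card_eq_three hd hS3.symm hF hvars (by omega) hdvd
  have hkill (i : σ) (hi : i ∈ S) (hcard : #{ν ∈ F.mixedSupport | ν i = 0} + 3 ≤ #S)
      (ν : σ →₀ ℕ) (hν : ν i = 0) : coeff ν F = 0 := by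
    have hS' : #(S.erase i) = M - 1 := by rw [card_erase_of_mem hi, hM]
    have := ih (M - 1) (by omega) (by omega) (hF.killVar i)
      ((vars_killVar_subset i F).trans (erase_subset_erase i hvars))
      (by rw [mixedSupport_killVar]; omega)
      (by rw [← killVar_sum_X hi]; exact map_dvd _ hdvd) hS'
    simpa [coeff_killVar, hν] using congr_arg (coeff ν) this
  have hsupp : F.support ⊆ F.mixedSupport := by
    intro ν hν
    by_contra hνA
    obtain ⟨l, -, rfl⟩ := exists_eq_single_of_mem_support (by omega) hF hvars hν hνA
    obtain ⟨i, hi, hil, hcard⟩ := exists_mem_ne_card_filter_apply_eq_zero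
      (fun a ha => ⟨fun j hj => hvars ((mem_vars_iff_mem_support j).2
        ⟨a, (mem_mixedSupport.1 ha).1, hj⟩), (mem_mixedSupport.1 ha).2⟩) (by omega) hmixed l
    exact mem_support_iff.1 hν (hkill i hi hcard _ (Finsupp.single_eq_of_ne hil))
  by_contra hF0
  obtain ⟨G, rfl⟩ := hdvd
  have h₁ := card_le_card_support_sum_X_mul S (right_ne_zero_of_mul hF0)
  have h₂ := card_le_card hsupp
  omega

theorem eq_zero_of_sum_monomial_mem_span {ι : Type*} [Fintype ι] {d : ℕ} (hd : 4 ≤ d)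
    {S : Finset σ} (hS : 3 ≤ #S) {e : ι → σ →₀ ℕ} (he : Function.Injective e)
    (hdeg : ∀ s, (e s).degree = d) (hvars : ∀ s, (e s).support ⊆ S)
    (hmixed : #{s | 2 ≤ #(e s).support} + 2 ≤ #S) {g : ι → R}
    (h : ∑ s, monomial (e s) (g s) ∈ Ideal.span {∑ j ∈ S, X j}) : g = 0 := by
  set F := ∑ s, monomial (e s) (g s)
  have hcoeff (s : ι) : coeff (e s) F = g s := by
    simp only [F, coeff_sum, coeff_monomial]
    rw [sum_eq_single s (fun t _ hts => if_neg (he.ne hts)) (by simp), if_pos rfl]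
  have hsupp {ν : σ →₀ ℕ} (hν : ν ∈ F.support) : ∃ s, e s = ν := by
    by_contra! h
    exact mem_support_iff.1 hν (by simp [F, coeff_sum, coeff_monomial, h])
  have hF0 : F = 0 := by
    refine eq_zero_of_sum_X_dvd hd hS (IsHomogeneous.sum _ _ _ fun s _ =>
      isHomogeneous_monomial _ (hdeg s)) (fun j hj => ?_) ?_ (Ideal.mem_span_singleton.1 h)
    · obtain ⟨ν, hν, hj⟩ := (mem_vars_iff_mem_support j).1 hj
      obtain ⟨s, rfl⟩ := hsupp hν
      exact hvars s hj
    · have : F.mixedSupport ⊆ image e {s | 2 ≤ #(e s).support} := fun ν hν => by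
        obtain ⟨hνF, hν2⟩ := mem_mixedSupport.1 hν
        obtain ⟨s, rfl⟩ := hsupp hνF
        exact mem_image_of_mem e (by simpa using hν2)
      have := (card_le_card this).trans card_image_le
      omega
  funext s
  rw [← hcoeff, hF0, coeff_zero, Pi.zero_apply]

theorem eq_zero_of_sum_monomial_single_add_sum_monomial_mem_span [Fintype σ] {ι : Type*}
    [Fintype ι] {d : ℕ} (hd : 4 ≤ d) (hσ : 3 ≤ Fintype.card σ)
    (hι : Fintype.card ι + 2 ≤ Fintype.card σ) {f : ι → σ →₀ ℕ} (hf : Function.Injective f)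
    (hdeg : ∀ j, (f j).degree = d) (hpure : ∀ j i, f j ≠ Finsupp.single i d) {c : σ → R}
    {b : ι → R}
    (h : ∑ i, monomial (Finsupp.single i d) (c i) + ∑ j, monomial (f j) (b j) ∈
      Ideal.span {∑ i, X i}) :
    c = 0 ∧ b = 0 := by
  let e : σ ⊕ ι → σ →₀ ℕ := Sum.elim (fun i => Finsupp.single i d) f
  have he : Function.Injective e :=
    (Finsupp.single_left_injective (by omega)).sumElim hf fun i j hij => hpure j i hij.symm
  have hmixed : ({s | 2 ≤ #(e s).support} : Finset (σ ⊕ ι)) ⊆ univ.map .inr := fun s hs => by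
    cases s with
    | inl i => simp [e, Finsupp.support_single i (show d ≠ 0 by omega)] at hs
    | inr j => simp
  have key := eq_zero_of_sum_monomial_mem_span hd (by simpa using hσ) he
    (Sum.forall.2 ⟨fun i => Finsupp.degree_single i d, hdeg⟩) (fun _ => subset_univ _)
    (by have := card_le_card hmixed; simp only [card_map, card_univ] at this ⊢; omega)
    (g := Sum.elim c b) (by rwa [Fintype.sum_sum_type])
  exact ⟨_root_.funext fun i => congr_fun key (.inl i),
    _root_.funext fun j => congr_fun key (.inr j)⟩

end CharZero

end MvPolynomial

theorem stmt_8 (k : Type*) [Field k] [CharZero k] (n d : ℕ) (hn : 2 ≤ n) (hd : 4 ≤ d)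
    (a : Fin (n - 1) → Fin (n + 1) → ℕ) (ha : ∀ j, ∑ i, a j i = d)
    (hinj : Function.Injective a)
    (hne : ∀ j i, a j ≠ fun s => if s = i then d else 0)
    (c : Fin (n + 1) → k) (b : Fin (n - 1) → k)
    (h : (∑ i, c i • X i ^ d) + (∑ j, b j • ∏ i, X i ^ a j i) ∈
      Ideal.span {(∑ i, X i : MvPolynomial (Fin (n + 1)) k)}) :
    c = 0 ∧ b = 0 := by
  refine eq_zero_of_sum_monomial_single_add_sum_monomial_mem_span hd (by simp; omega)
    (by simp; omega) (Finsupp.equivFunOnFinite.symm.injective.comp hinj)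
    (fun j => by simp [Finsupp.degree_eq_sum, ha]) (fun j i hji => hne j i ?_) ?_
  · funext s
    simpa [Finsupp.single_apply, eq_comm] using DFunLike.congr_fun hji s
  · convert h using 2 <;> refine sum_congr rfl fun _ _ => ?_
    · rw [X_pow_eq_monomial, smul_monomial, smul_eq_mul, mul_one]
    · rw [smul_eq_C_mul, monomial_eq, Finsupp.prod_fintype _ _ (by simp)]
      rfl
end

section
/- Let n ≥ 2, d ≥ 2, and char k = 0. The 2n+1 monomials x_0^d, x_1^d, …, x_n^d, x_0^{d-1}x_1, x_0^{d-1}x_2, …, x_0^{d-1}x_n are k-linearly dependent modulo the linear form x_0 + x_1 + ⋯ + x_n. -/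
open MvPolynomial

theorem stmt_9 (k : Type*) [Field k] [CharZero k] (n d : ℕ) (hn : 2 ≤ n) (hd : 2 ≤ d) :
    ∃ (c : Fin (n + 1) → k) (b : Fin n → k), (c ≠ 0 ∨ b ≠ 0) ∧
      (∑ i, c i • X i ^ d) + (∑ j : Fin n, b j • (X 0 ^ (d - 1) * X j.succ)) ∈
        Ideal.span {(∑ i, X i : MvPolynomial (Fin (n + 1)) k)} := by
  refine ⟨Pi.single 0 1, fun _ => 1, Or.inr ?_, ?_⟩
  · intro h
    have := congrFun h ⟨0, by omega⟩
    simp at this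
  · have h1 : (∑ i, (Pi.single 0 1 : Fin (n+1) → k) i • X i ^ d) =
        (X 0 ^ d : MvPolynomial (Fin (n + 1)) k) := by
      rw [Finset.sum_eq_single 0]
      · simp
      · intro b _ hb; simp [Pi.single_apply, hb]
      · simp
    have h2 : (∑ i, (Pi.single 0 1 : Fin (n+1) → k) i • X i ^ d) +
        (∑ j : Fin n, (1:k) • (X 0 ^ (d - 1) * X j.succ)) =
        (X 0 ^ (d-1)) * ∑ i, (X i : MvPolynomial (Fin (n + 1)) k) := by
      rw [h1, Finset.mul_sum, Fin.sum_univ_succ]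
      have : (X 0 ^ (d-1) * X 0 : MvPolynomial (Fin (n + 1)) k) = X 0 ^ d := by
        rw [← pow_succ]
        congr 1
        omega
      simp [this]
    rw [h2]
    exact Ideal.mem_span_singleton.2 ⟨X 0 ^ (d-1), mul_comm _ _⟩
end

section
/- Let n = 2 and d ≥ 4, and fix 6 ≤ r ≤ d+1. The set of r monomials {x_0^d, x_1^d, x_2^d} ∪ { x_0^{d-r+3} x_1 x_2 · m : m ∈ {x_0^{r-5}, x_0^{r-6}x_1, …, x_0 x_1^{r-6}, x_1^{r-5}, x_2^{r-5}} } consists of exactly r distinct monomials of degree d, and these monomials are k-linearly dependent modulo the linear form x_0 + x_1 + x_2 (char k = 0). -/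
/-!
Every monomial of the family is `x₀^a x₁^b x₂^c` for an explicit exponent triple; the triples
are pairwise distinct and sum to `d`. Put `n = r - 5`. The monomials with indices `3, …, r - 2` are
`x₀^(d+3-r) x₁ x₂ · x₁^i x₀^(n-i)` and the last one is `x₀^(d+3-r) x₁ x₂ · x₂^n`, so weighting
them by `-(-1)^n C(n, i)` and `1` gives `x₀^(d+3-r) x₁ x₂ (x₂^n - (-(x₀ + x₁))^n)`, which is a
multiple of `x₀ + x₁ + x₂` because `x₂ ≡ -(x₀ + x₁)` modulo it.
-/

open MvPolynomial Finset

section TrivariateMonomial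

variable (R : Type*) [CommSemiring R]

noncomputable def trivariateMonomial (a : ℕ × ℕ × ℕ) : MvPolynomial (Fin 3) R :=
  X 0 ^ a.1 * X 1 ^ a.2.1 * X 2 ^ a.2.2

theorem trivariateMonomial_eq_monomial (a : ℕ × ℕ × ℕ) :
    trivariateMonomial R a =
      monomial (Finsupp.single 0 a.1 + Finsupp.single 1 a.2.1 + Finsupp.single 2 a.2.2) 1 := by
  simp only [trivariateMonomial, X_pow_eq_monomial, monomial_mul, one_mul]

theorem trivariateMonomial_injective [Nontrivial R] :
    Function.Injective (trivariateMonomial R) := by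
  rintro ⟨a₀, a₁, a₂⟩ ⟨b₀, b₁, b₂⟩ h
  simp only [trivariateMonomial_eq_monomial] at h
  have hexp := monomial_left_injective one_ne_zero h
  obtain rfl : a₀ = b₀ := by simpa using DFunLike.congr_fun hexp 0
  obtain rfl : a₁ = b₁ := by simpa using DFunLike.congr_fun hexp 1
  obtain rfl : a₂ = b₂ := by simpa using DFunLike.congr_fun hexp 2
  rfl

theorem isHomogeneous_trivariateMonomial (a : ℕ × ℕ × ℕ) :
    (trivariateMonomial R a).IsHomogeneous (a.1 + a.2.1 + a.2.2) :=
  ((isHomogeneous_X_pow 0 _).mul (isHomogeneous_X_pow 1 _)).mul (isHomogeneous_X_pow 2 _)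

end TrivariateMonomial

theorem add_add_dvd_pow_sub_neg_pow {R : Type*} [CommRing R] (x y z : R) (n : ℕ) :
    x + y + z ∣ z ^ n - (-(x + y)) ^ n := by
  have h : z - -(x + y) = x + y + z := by ring
  exact h ▸ sub_dvd_pow_sub_pow z (-(x + y)) n

def togliattiExponents (d r j : ℕ) : ℕ × ℕ × ℕ :=
  if j = 0 then (d, 0, 0)
  else if j = 1 then (0, d, 0)
  else if j = 2 then (0, 0, d)
  else if j < r - 1 then (d - 2 - (j - 3), j - 2, 1)
  else (d + 3 - r, 1, r - 4)

section TogliattiExponents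

variable {d r : ℕ}

theorem togliattiExponents_injOn (hr : 6 ≤ r) (hrd : r ≤ d + 1) :
    Set.InjOn (togliattiExponents d r) (Set.Iio r) := by
  intro a ha b hb h
  simp only [Set.mem_Iio] at ha hb
  unfold togliattiExponents at h
  split_ifs at h <;> simp only [Prod.mk.injEq] at h <;> omega

theorem togliattiExponents_degree {j : ℕ} (hrd : r ≤ d + 1) (hj : j < r) :
    (togliattiExponents d r j).1 + (togliattiExponents d r j).2.1 +
      (togliattiExponents d r j).2.2 = d := by
  unfold togliattiExponents
  split_ifs <;> dsimp only <;> omega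

theorem togliattiExponents_three_add {i : ℕ} (hi : i + 4 < r) :
    togliattiExponents d r (3 + i) = (d - 2 - i, i + 1, 1) := by
  unfold togliattiExponents
  split_ifs <;> simp only [Prod.mk.injEq, and_true] <;> omega

theorem togliattiExponents_of_add_one_eq {j : ℕ} (hj : j + 1 = r) (h3 : 3 ≤ j) :
    togliattiExponents d r j = (d + 2 - j, 1, j - 3) := by
  unfold togliattiExponents
  split_ifs <;> simp only [Prod.mk.injEq, true_and] <;> omega

end TogliattiExponents

theorem togliattiMonomial_eq_trivariateMonomial (R : Type*) [CommSemiring R] (d r j : ℕ) :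
    (if j = 0 then X 0 ^ d
      else if j = 1 then X 1 ^ d
      else if j = 2 then X 2 ^ d
      else if j < r - 1 then X 0 ^ (d - 2 - (j - 3)) * X 1 ^ (j - 2) * X 2
      else X 0 ^ (d + 3 - r) * X 1 * X 2 ^ (r - 4) : MvPolynomial (Fin 3) R) =
      trivariateMonomial R (togliattiExponents d r j) := by
  unfold togliattiExponents
  split_ifs <;> simp [trivariateMonomial]

def togliattiSyzygyCoeff (R : Type*) [Ring R] (n j : ℕ) : R :=
  if j < 3 then 0 else if j = n + 4 then 1 else -(-1) ^ n * n.choose (j - 3)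

section TogliattiSyzygyCoeff

variable (R : Type*) [Ring R] (n : ℕ)

theorem togliattiSyzygyCoeff_of_lt_three {j : ℕ} (hj : j < 3) : togliattiSyzygyCoeff R n j = 0 :=
  if_pos hj

theorem togliattiSyzygyCoeff_three_add {i : ℕ} (hi : i ≤ n) :
    togliattiSyzygyCoeff R n (3 + i) = -(-1) ^ n * n.choose i := by
  rw [togliattiSyzygyCoeff, if_neg (by omega), if_neg (by omega), Nat.add_sub_cancel_left]

theorem togliattiSyzygyCoeff_add_four : togliattiSyzygyCoeff R n (n + 4) = 1 := by
  rw [togliattiSyzygyCoeff, if_neg (by omega), if_pos rfl]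

end TogliattiSyzygyCoeff

theorem sum_togliattiSyzygyCoeff_smul (R : Type*) [CommRing R] (n e : ℕ) :
    ∑ j ∈ range (n + 5), togliattiSyzygyCoeff R n j •
        trivariateMonomial R (togliattiExponents (n + 4 + e) (n + 5) j) =
      X 0 ^ (e + 2) * X 1 * X 2 * (X 2 ^ n - (-(X 0 + X 1)) ^ n) := by
  set f : ℕ → MvPolynomial (Fin 3) R := fun j =>
    togliattiSyzygyCoeff R n j • trivariateMonomial R (togliattiExponents (n + 4 + e) (n + 5) j)
  have hsplit :
      ∑ j ∈ range (n + 4), f j = ∑ j ∈ range 3, f j + ∑ i ∈ range (n + 1), f (3 + i) := by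
    rw [← sum_range_add, Nat.add_comm 3, Nat.add_assoc]
  have hhead : ∑ j ∈ range 3, f j = 0 :=
    sum_eq_zero fun j hj => by
      simp only [f, togliattiSyzygyCoeff_of_lt_three R n (mem_range.mp hj), zero_smul]
  have hmid : ∀ i ∈ range (n + 1), f (3 + i) =
      -(-1) ^ n * (X 0 ^ (e + 2) * X 1 * X 2) *
        (X 1 ^ i * X 0 ^ (n - i) * (n.choose i : MvPolynomial (Fin 3) R)) := by
    intro i hi
    have hi : i ≤ n := Nat.lt_succ_iff.mp (mem_range.mp hi)
    simp only [f, togliattiSyzygyCoeff_three_add R n hi,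
      togliattiExponents_three_add (by omega : i + 4 < n + 5), trivariateMonomial, smul_eq_C_mul,
      map_mul, map_neg, map_pow, map_one, map_natCast]
    rw [show n + 4 + e - 2 - i = e + 2 + (n - i) by omega]
    ring
  have hlast : f (n + 4) = X 0 ^ (e + 2) * X 1 * X 2 * X 2 ^ n := by
    simp only [f, togliattiSyzygyCoeff_add_four, one_smul,
      togliattiExponents_of_add_one_eq (by omega : n + 4 + 1 = n + 5) (by omega : 3 ≤ n + 4),
      trivariateMonomial]
    rw [show n + 4 + e + 2 - (n + 4) = e + 2 by omega, show n + 4 - 3 = n + 1 by omega]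
    ring
  rw [sum_range_succ]
  change ∑ j ∈ range (n + 4), f j + f (n + 4) = _
  rw [hsplit, hhead, sum_congr rfl hmid, hlast, ← mul_sum, ← add_pow, neg_pow (X 0 + X 1)]
  ring

theorem stmt_10_general (k : Type*) [Field k] (d r : ℕ)
    (hr : 6 ≤ r) (hrd : r ≤ d + 1) :
    ∀ F : Fin r → MvPolynomial (Fin 3) k,
      (F = fun j : Fin r =>
        if (j : ℕ) = 0 then X 0 ^ d
        else if (j : ℕ) = 1 then X 1 ^ d
        else if (j : ℕ) = 2 then X 2 ^ d
        else if (j : ℕ) < r - 1 then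
          X 0 ^ (d - 2 - ((j : ℕ) - 3)) * X 1 ^ ((j : ℕ) - 2) * X 2
        else X 0 ^ (d + 3 - r) * X 1 * X 2 ^ (r - 4)) →
      Function.Injective F ∧ (∀ j, (F j).IsHomogeneous d) ∧
        ∃ c : Fin r → k, c ≠ 0 ∧
          (∑ j, c j • F j) ∈
            Ideal.span {(X 0 + X 1 + X 2 : MvPolynomial (Fin 3) k)} := by
  rintro F rfl
  simp only [togliattiMonomial_eq_trivariateMonomial]
  refine ⟨fun a b hab => ?_, fun j => ?_, ?_⟩
  · exact Fin.ext <|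
      togliattiExponents_injOn hr hrd a.isLt b.isLt (trivariateMonomial_injective k hab)
  · have h := isHomogeneous_trivariateMonomial k (togliattiExponents d r j)
    rwa [togliattiExponents_degree hrd j.isLt] at h
  · obtain ⟨n, rfl⟩ : ∃ n, r = n + 5 := ⟨r - 5, by omega⟩
    obtain ⟨e, rfl⟩ : ∃ e, d = n + 4 + e := ⟨d - (n + 4), by omega⟩
    refine ⟨fun j => togliattiSyzygyCoeff k n j, fun h => ?_, ?_⟩
    · simpa [togliattiSyzygyCoeff_add_four] using congrFun h (Fin.last _)
    · rw [Ideal.mem_span_singleton, Fin.sum_univ_eq_sum_range (fun j => togliattiSyzygyCoeff k n j •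
          trivariateMonomial k (togliattiExponents (n + 4 + e) (n + 5) j)),
        sum_togliattiSyzygyCoeff_smul]
      exact (add_add_dvd_pow_sub_neg_pow _ _ _ n).mul_left _

theorem stmt_10 (k : Type*) [Field k] [CharZero k] (d r : ℕ)
    (hd : 4 ≤ d) (hr : 6 ≤ r) (hrd : r ≤ d + 1) :
    ∀ F : Fin r → MvPolynomial (Fin 3) k,
      (F = fun j : Fin r =>
        if (j : ℕ) = 0 then X 0 ^ d
        else if (j : ℕ) = 1 then X 1 ^ d
        else if (j : ℕ) = 2 then X 2 ^ d
        else if (j : ℕ) < r - 1 then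
          X 0 ^ (d - 2 - ((j : ℕ) - 3)) * X 1 ^ ((j : ℕ) - 2) * X 2
        else X 0 ^ (d + 3 - r) * X 1 * X 2 ^ (r - 4)) →
      Function.Injective F ∧ (∀ j, (F j).IsHomogeneous d) ∧
        ∃ c : Fin r → k, c ≠ 0 ∧
          (∑ j, c j • F j) ∈
            Ideal.span {(X 0 + X 1 + X 2 : MvPolynomial (Fin 3) k)} :=
  stmt_10_general k d r hr hrd
end

section
/- For any d ≥ 4 and n ≥ 2, the ideal I = (x_0^d, x_1^d, …, x_n^d) + x_1·(x_1,…,x_n)^{d-1} + x_2·(x_2,…,x_n)^{d-1} + ⋯ + x_{n-2}·(x_{n-2},x_{n-1},x_n)^{d-1} + x_0^3·(x_{n-1},x_n)^{d-3} in k[x_0,…,x_n] has a minimal generating set of exactly binomial(n+d−1, n−1) monomials of degree d. -/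
/-!
Encode a monomial of degree `d` by its exponent vector. Let `T` be the monomials avoiding `x_0`
and `D ⊆ T` those in `x_{n-1}, x_n` only, so `|T| = C(n+d-1, n-1)` and `|D| = d + 1`. A monomial
of `T` lies in `x_t·(x_t,…,x_n)^{d-1}` for some `1 ≤ t ≤ n-2` iff its smallest variable is such an
`x_t`, i.e. iff it is not in `D`. The pure powers add exactly `x_0^d, x_{n-1}^d, x_n^d` to `T \ D`,
and `x_0^3·(x_{n-1},x_n)^{d-3}` adds `d - 2` monomials with `x_0`-exponent `3`. In total
`|T| - (d + 1) + 3 + (d - 2) = |T|`.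
-/

open Finset

section PiAntidiag
variable {ι : Type*} [DecidableEq ι]

theorem card_piAntidiag_nat (s : Finset ι) (m : ℕ) :
    #(piAntidiag s m) = (#s + m - 1).choose m := by
  rw [← card_finsuppAntidiag_nat_eq_choose, finsuppAntidiag, card_map, card_attach]

theorem card_piAntidiag_of_card_eq_two {s : Finset ι} (hs : #s = 2) (m : ℕ) :
    #(piAntidiag s m) = m + 1 := by
  rw [card_piAntidiag_nat, hs, show 2 + m - 1 = m + 1 by omega, Nat.choose_succ_self_right]

theorem mem_piAntidiag_iff_sum_univ [Fintype ι] {s : Finset ι} {m : ℕ} {a : ι → ℕ} :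
    a ∈ piAntidiag s m ↔ ∑ i, a i = m ∧ ∀ i, a i ≠ 0 → i ∈ s := by
  rw [mem_piAntidiag, and_congr_left_iff]
  intro hs
  rw [sum_subset (subset_univ s) fun i _ hi => not_not.1 (mt (hs i) hi)]

theorem filter_piAntidiag_insert_apply_eq {s : Finset ι} {r : ι} (hr : r ∉ s) {c m : ℕ}
    (hc : c ≤ m) :
    {a ∈ piAntidiag (insert r s) m | a r = c} =
      (piAntidiag s (m - c)).map (addLeftEmbedding (Pi.single r c)) := by
  ext a
  simp only [mem_filter, mem_piAntidiag, mem_map, addLeftEmbedding_apply, sum_insert hr,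
    mem_insert]
  constructor
  · rintro ⟨⟨hsum, hsupp⟩, rfl⟩
    refine ⟨Function.update a r 0, ⟨?_, fun i hi => ?_⟩, ?_⟩
    · rw [sum_congr rfl fun i hi => Function.update_of_ne (ne_of_mem_of_not_mem hi hr) 0 a]
      exact Nat.eq_sub_of_add_eq' hsum
    · have hir : i ≠ r := by rintro rfl; simp at hi
      exact (hsupp i (by rwa [Function.update_of_ne hir] at hi)).resolve_left hir
    · ext i
      by_cases hir : i = r
      · subst hir; simp
      · simp [hir]
  · rintro ⟨b, ⟨hsum, hsupp⟩, rfl⟩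
    have hbr : b r = 0 := by_contra fun h => hr (hsupp r h)
    refine ⟨⟨?_, fun i hi => ?_⟩, by simp [hbr]⟩
    · rw [sum_congr rfl fun i hi => by
        rw [Pi.add_apply, Pi.single_eq_of_ne (ne_of_mem_of_not_mem hi hr), zero_add]]
      simp only [Pi.add_apply, Pi.single_eq_same, hbr, add_zero]
      omega
    · by_cases hir : i = r
      · exact Or.inl hir
      · exact Or.inr (hsupp i (by simpa [hir] using hi))

theorem single_mem_piAntidiag_iff {s : Finset ι} {i : ι} {m : ℕ} (hm : m ≠ 0) :
    Pi.single i m ∈ piAntidiag s m ↔ i ∈ s := by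
  by_cases hi : i ∈ s <;> simp [Pi.single_apply, hi, hm]

theorem disjoint_piAntidiag_erase_filter_apply_eq [Fintype ι] {r : ι} {c m : ℕ} (hc : c ≠ 0)
    (S : Finset (ι → ℕ)) :
    Disjoint (piAntidiag (univ.erase r) m) {a ∈ S | a r = c} := by
  refine disjoint_left.2 fun a ha hS => ?_
  rw [mem_piAntidiag] at ha
  exact (mem_erase.1 (ha.2 r ((mem_filter.1 hS).2 ▸ hc))).1 rfl

theorem disjoint_image_single_filter_apply_eq [DecidableEq (ι → ℕ)] {R : Finset ι} {r : ι}
    {c m : ℕ} (hc : c ≠ 0) (hcm : c ≠ m) (S : Finset (ι → ℕ)) :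
    Disjoint (R.image (Pi.single · m)) {a ∈ S | a r = c} := by
  refine disjoint_left.2 fun a ha hS => ?_
  obtain ⟨i, -, rfl⟩ := mem_image.1 ha
  have := (mem_filter.1 hS).2
  rw [Pi.single_apply] at this
  split_ifs at this <;> omega

theorem card_image_single [DecidableEq (ι → ℕ)] {R : Finset ι} {m : ℕ} (hm : m ≠ 0) :
    #(R.image (Pi.single · m)) = #R :=
  card_image_of_injective _ fun i j h => by
    by_contra hij
    simpa [Pi.single_apply, hij, hm] using congrFun h i

end PiAntidiag

theorem exists_min_support_mem_Icc_iff {m k : ℕ} {a : Fin (m + 1) → ℕ} :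
    (∃ t : Fin (m + 1), 1 ≤ (t : ℕ) ∧ (t : ℕ) ≤ k ∧ 1 ≤ a t ∧ ∀ j, a j ≠ 0 → (t : ℕ) ≤ j) ↔
      a 0 = 0 ∧ ∃ j, a j ≠ 0 ∧ (j : ℕ) ≤ k := by
  constructor
  · rintro ⟨t, ht, htk, hat, hmin⟩
    refine ⟨by_contra fun h => ?_, t, by omega, htk⟩
    have := hmin 0 h
    simp only [Fin.val_zero] at this
    omega
  · rintro ⟨h0, j, hj, hjk⟩
    obtain ⟨t, ht, hmin⟩ := wellFounded_lt.has_min {i | a i ≠ 0} ⟨j, hj⟩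
    have hmin' (i) (hi : a i ≠ 0) : (t : ℕ) ≤ i := Fin.le_def.1 (not_lt.1 (hmin i hi))
    have ht0 : (t : ℕ) ≠ 0 := fun h => ht ((Fin.ext h : t = 0) ▸ h0)
    exact ⟨t, by omega, (hmin' j hj).trans hjk, Nat.one_le_iff_ne_zero.2 ht, hmin'⟩

def lastTwo (n : ℕ) : Finset (Fin (n + 1)) := Ici ⟨n - 1, by omega⟩

theorem mem_lastTwo {n : ℕ} {j : Fin (n + 1)} : j ∈ lastTwo n ↔ n - 1 ≤ (j : ℕ) := by
  simp [lastTwo, Fin.le_def]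

theorem card_lastTwo {n : ℕ} (hn : 1 ≤ n) : #(lastTwo n) = 2 := by
  simp only [lastTwo, Fin.card_Ici]
  omega

theorem zero_notMem_lastTwo {n : ℕ} (hn : 2 ≤ n) : 0 ∉ lastTwo n := by
  simp only [mem_lastTwo, Fin.val_zero]
  omega

theorem card_insert_zero_lastTwo {n : ℕ} (hn : 2 ≤ n) : #(insert 0 (lastTwo n)) = 3 := by
  rw [card_insert_of_notMem (zero_notMem_lastTwo hn), card_lastTwo (by omega)]

section
variable {n : ℕ} (d : ℕ)

theorem card_piAntidiag_erase_zero (hn : 1 ≤ n) :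
    #(piAntidiag (univ.erase (0 : Fin (n + 1))) d) = (n + d - 1).choose (n - 1) := by
  rw [card_piAntidiag_nat, card_erase_of_mem (mem_univ _), card_univ, Fintype.card_fin,
    Nat.add_sub_cancel]
  exact Nat.choose_symm_of_eq_add (by omega)

theorem card_filter_piAntidiag_apply_zero_eq_three (hn : 2 ≤ n) (hd : 3 ≤ d) :
    #{a ∈ piAntidiag (insert 0 (lastTwo n)) d | a 0 = 3} = d - 2 := by
  rw [filter_piAntidiag_insert_apply_eq (zero_notMem_lastTwo hn) hd, card_map,
    card_piAntidiag_of_card_eq_two (card_lastTwo (by omega))]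
  omega

theorem piAntidiag_lastTwo_subset (hn : 2 ≤ n) :
    piAntidiag (lastTwo n) d ⊆ piAntidiag (univ.erase 0) d := by
  intro a
  simp only [mem_piAntidiag_iff_sum_univ, mem_erase, mem_univ, and_true]
  exact fun ⟨hsum, hsupp⟩ => ⟨hsum, fun i hi h => zero_notMem_lastTwo hn (h ▸ hsupp i hi)⟩

theorem setOf_exists_min_support_eq_sdiff (hn : 2 ≤ n) :
    {a : Fin (n + 1) → ℕ | (∑ j, a j = d) ∧ ∃ t : Fin (n + 1), 1 ≤ (t : ℕ) ∧ (t : ℕ) ≤ n - 2 ∧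
        1 ≤ a t ∧ ∀ j, a j ≠ 0 → (t : ℕ) ≤ (j : ℕ)} =
      ↑(piAntidiag (univ.erase 0) d \ piAntidiag (lastTwo n) d) := by
  ext a
  simp only [Set.mem_ofPred_eq, coe_sdiff, Set.mem_sdiff, mem_coe, mem_piAntidiag_iff_sum_univ,
    exists_min_support_mem_Icc_iff, mem_erase, mem_univ, and_true, mem_lastTwo]
  have h0 : (∀ i, a i ≠ 0 → i ≠ 0) ↔ a 0 = 0 :=
    ⟨fun h => by_contra fun h0 => h 0 h0 rfl, fun h i hi hi0 => hi (hi0 ▸ h)⟩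
  have hlt : (∃ j, a j ≠ 0 ∧ (j : ℕ) ≤ n - 2) ↔ ¬∀ i, a i ≠ 0 → n - 1 ≤ (i : ℕ) := by
    push Not
    exact exists_congr fun j => and_congr_right fun _ => by omega
  rw [h0, hlt]
  tauto

theorem single_mem_piAntidiag_sdiff_iff (hd : d ≠ 0) {i : Fin (n + 1)} :
    Pi.single i d ∈ piAntidiag (univ.erase 0) d \ piAntidiag (lastTwo n) d ↔
      i ∉ insert 0 (lastTwo n) := by
  simp [single_mem_piAntidiag_iff hd]

theorem disjoint_piAntidiag_sdiff_image_single (hd : d ≠ 0) :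
    Disjoint (piAntidiag (univ.erase 0) d \ piAntidiag (lastTwo n) d)
      ((insert 0 (lastTwo n)).image (Pi.single · d)) := by
  refine disjoint_right.2 fun a ha => ?_
  obtain ⟨i, hi, rfl⟩ := mem_image.1 ha
  exact (single_mem_piAntidiag_sdiff_iff d hd).not_left.2 hi

theorem setOf_ite_union_sdiff_eq (hd : d ≠ 0) :
    {a : Fin (n + 1) → ℕ | ∃ i, a = fun j => if j = i then d else 0} ∪
        ↑(piAntidiag (univ.erase 0) d \ piAntidiag (lastTwo n) d) =
      ↑(piAntidiag (univ.erase 0) d \ piAntidiag (lastTwo n) d ∪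
        (insert 0 (lastTwo n)).image (Pi.single · d)) := by
  have hsingle (i : Fin (n + 1)) : (fun j => if j = i then d else 0) = Pi.single i d :=
    funext fun j => (Pi.single_apply i d j).symm
  ext a
  simp only [hsingle, Set.mem_union, Set.mem_ofPred_eq, coe_union, coe_image, Set.mem_image,
    mem_coe]
  constructor
  · rintro (⟨i, rfl⟩ | h)
    · by_cases hi : i ∈ insert 0 (lastTwo n)
      · exact Or.inr ⟨i, hi, rfl⟩
      · exact Or.inl ((single_mem_piAntidiag_sdiff_iff d hd).2 hi)
    · exact Or.inl h
  · rintro (h | ⟨i, -, rfl⟩)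
    · exact Or.inr h
    · exact Or.inl ⟨i, rfl⟩

theorem setOf_apply_zero_eq_three_eq_filter :
    {a : Fin (n + 1) → ℕ | (∑ j, a j = d) ∧ a 0 = 3 ∧ ∀ j, a j ≠ 0 → j = 0 ∨ n - 1 ≤ (j : ℕ)} =
      ↑{a ∈ piAntidiag (insert 0 (lastTwo n)) d | a 0 = 3} := by
  ext a
  simp only [Set.mem_ofPred_eq, coe_filter, mem_piAntidiag_iff_sum_univ, mem_insert, mem_lastTwo]
  tauto

end

theorem stmt_11 (n d : ℕ) (hn : 2 ≤ n) (hd : 4 ≤ d) :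
    ({a : Fin (n + 1) → ℕ | ∃ i, a = fun j => if j = i then d else 0}
      ∪ {a | (∑ j, a j = d) ∧ ∃ t : Fin (n + 1), 1 ≤ (t : ℕ) ∧ (t : ℕ) ≤ n - 2 ∧
          1 ≤ a t ∧ ∀ j, a j ≠ 0 → (t : ℕ) ≤ (j : ℕ)}
      ∪ {a | (∑ j, a j = d) ∧ a 0 = 3 ∧
          ∀ j, a j ≠ 0 → j = 0 ∨ n - 1 ≤ (j : ℕ)}).ncard
      = (n + d - 1).choose (n - 1) := by
  set T := piAntidiag (univ.erase (0 : Fin (n + 1))) d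
  set D := piAntidiag (lastTwo n) d
  set R := insert 0 (lastTwo n)
  set C := {a ∈ piAntidiag R d | a 0 = 3}
  have hDT : D ⊆ T := piAntidiag_lastTwo_subset d hn
  have hlast : #(lastTwo n) = 2 := card_lastTwo (by omega)
  have hTD : d + 1 ≤ (n + d - 1).choose (n - 1) := by
    rw [← card_piAntidiag_of_card_eq_two hlast, ← card_piAntidiag_erase_zero d (by omega)]
    exact card_le_card hDT
  have hdisj₁ : Disjoint (T \ D) (R.image (Pi.single · d) ∪ C) :=
    disjoint_union_right.2 ⟨disjoint_piAntidiag_sdiff_image_single d (by omega),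
      (disjoint_piAntidiag_erase_filter_apply_eq (by norm_num) _).mono_left sdiff_subset⟩
  have hdisj₂ : Disjoint (R.image (Pi.single · d)) C :=
    disjoint_image_single_filter_apply_eq (c := 3) (by norm_num) (by omega) _
  rw [setOf_exists_min_support_eq_sdiff d hn, setOf_ite_union_sdiff_eq d (by omega),
    setOf_apply_zero_eq_three_eq_filter, ← coe_union, Set.ncard_coe_finset, union_assoc,
    card_union_of_disjoint hdisj₁, card_union_of_disjoint hdisj₂, card_sdiff_of_subset hDT,
    card_image_single (by omega), card_piAntidiag_erase_zero d (by omega),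
    card_piAntidiag_of_card_eq_two hlast, card_insert_zero_lastTwo hn,
    card_filter_piAntidiag_apply_zero_eq_three d hn (by omega)]
  omega
end

section
/- For d ≥ 4 and n ≥ 2, char k = 0, the binomial(n+d−1,n−1) monomial generators of the ideal I = (x_0^d,…,x_n^d) + x_1(x_1,…,x_n)^{d-1} + x_2(x_2,…,x_n)^{d-1} + ⋯ + x_{n-2}(x_{n-2},x_{n-1},x_n)^{d-1} + x_0^3(x_{n-1},x_n)^{d-3} become k-linearly dependent after substituting x_0 = x_1 + x_2 + ⋯ + x_n. -/
open MvPolynomial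

set_option linter.unusedSectionVars false
namespace Prop46Aux

variable (k : Type*) [Field k] [CharZero k] (n d : ℕ)

/-- index n-1 -/
def pp : Fin (n + 1) := ⟨n - 1, by omega⟩
/-- index n -/
def qq : Fin (n + 1) := ⟨n, by omega⟩

/-- the linear form substituted for x₀ -/
noncomputable def L : MvPolynomial (Fin (n + 1)) k := ∑ j ∈ Finset.univ \ {0}, X j

/-- indices 1..n-2 -/
def S : Finset (Fin (n + 1)) :=
  Finset.univ.filter fun j => 1 ≤ (j : ℕ) ∧ (j : ℕ) ≤ n - 2

noncomputable def W : MvPolynomial (Fin (n + 1)) k := ∑ j ∈ S n, X j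

noncomputable def Q : MvPolynomial (Fin (n + 1)) k :=
  L k n ^ 3 * (L k n ^ (d - 3) - (X (pp n) + X (qq n)) ^ (d - 3))

variable {n}

lemma hp0 (hn : 2 ≤ n) : pp n ≠ 0 := by
  simp [pp, Fin.ext_iff]; omega

lemma hq0 (hn : 2 ≤ n) : qq n ≠ 0 := by
  simp [qq, Fin.ext_iff]; omega

lemma hpq (hn : 2 ≤ n) : pp n ≠ qq n := by
  simp [pp, qq, Fin.ext_iff]; omega

lemma univ_split (hn : 2 ≤ n) :
    (Finset.univ \ {0} : Finset (Fin (n + 1))) = S n ∪ {pp n, qq n} := by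
  ext j
  simp only [Finset.mem_sdiff, Finset.mem_univ, Finset.mem_singleton, true_and,
    S, Finset.mem_union, Finset.mem_filter, Finset.mem_insert, pp, qq, Fin.ext_iff,
    Fin.val_zero]
  have := j.isLt
  omega

lemma L_eq (hn : 2 ≤ n) : L k n = W k n + (X (pp n) + X (qq n)) := by
  rw [L, univ_split hn, Finset.sum_union, W]
  · rw [Finset.sum_pair (hpq hn)]
  · rw [Finset.disjoint_left]
    intro j hj hj'
    simp only [S, Finset.mem_filter] at hj
    simp only [Finset.mem_insert, Finset.mem_singleton, pp, qq, Fin.ext_iff] at hj'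
    omega

end Prop46Aux

namespace Prop46Aux

variable (k : Type*) [Field k] [CharZero k] {n : ℕ} (d : ℕ)

lemma L_hom : (L k n).IsHomogeneous 1 := by
  apply MvPolynomial.IsHomogeneous.sum
  intro j _
  exact isHomogeneous_X k j

lemma Q_hom (hd : 4 ≤ d) : (Q k n d).IsHomogeneous d := by
  have h3 : (L k n ^ 3).IsHomogeneous 3 := (L_hom k).pow 3
  have h4 : (L k n ^ (d-3)).IsHomogeneous (d-3) := by
    simpa using (L_hom k).pow (d-3)
  have h5 : ((X (pp n) + X (qq n) : MvPolynomial (Fin (n+1)) k) ^ (d-3)).IsHomogeneous (d-3) := by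
    simpa using ((isHomogeneous_X k (pp n)).add (isHomogeneous_X k (qq n))).pow (d-3)
  have := h3.mul (h4.sub h5)
  rwa [show 3 + (d - 3) = d by omega] at this

lemma Q_supported (hn : 2 ≤ n) : Q k n d ∈ MvPolynomial.supported k {j : Fin (n+1) | j ≠ 0} := by
  have hX : ∀ j : Fin (n+1), j ≠ 0 → X j ∈ MvPolynomial.supported k {j : Fin (n+1) | j ≠ 0} := by
    intro j hj
    apply Algebra.subset_adjoin
    exact ⟨j, hj, rfl⟩
  have hL : L k n ∈ MvPolynomial.supported k {j : Fin (n+1) | j ≠ 0} := by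
    apply Subalgebra.sum_mem
    intro j hj
    simp only [Finset.mem_sdiff, Finset.mem_singleton] at hj
    exact hX j hj.2
  have hP : (X (pp n) + X (qq n) : MvPolynomial (Fin (n+1)) k) ∈
      MvPolynomial.supported k {j : Fin (n+1) | j ≠ 0} := by
    exact add_mem (hX _ (hp0 hn)) (hX _ (hq0 hn))
  exact mul_mem (pow_mem hL 3) (sub_mem (pow_mem hL (d-3)) (pow_mem hP (d-3)))

end Prop46Aux

namespace Prop46Aux

variable (k : Type*) [Field k] [CharZero k] {n : ℕ} (d : ℕ)

/-- every exponent vector in the support of Q has 0-th entry 0 -/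
lemma Q_supp_zero (hn : 2 ≤ n) {u : Fin (n+1) →₀ ℕ} (hu : u ∈ (Q k n d).support) :
    u 0 = 0 := by
  by_contra h
  have h0 : (0 : Fin (n+1)) ∈ u.support := Finsupp.mem_support_iff.mpr h
  have : (0 : Fin (n+1)) ∈ (Q k n d).vars := (mem_vars 0).mpr ⟨u, hu, h0⟩
  have := (MvPolynomial.mem_supported.mp (Q_supported k d hn)) this
  simp at this

/-- every exponent vector in the support of Q has total degree d -/
lemma Q_supp_deg (hd : 4 ≤ d) {u : Fin (n+1) →₀ ℕ} (hu : u ∈ (Q k n d).support) :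
    ∑ j, u j = d := by
  have hc : MvPolynomial.coeff u (Q k n d) ≠ 0 := MvPolynomial.mem_support_iff.mp hu
  have : u.degree = d := by
    by_contra h
    exact hc ((Q_hom k d hd).coeff_eq_zero h)
  rw [← this, Finsupp.degree]
  exact (Finset.sum_subset (Finset.subset_univ _) (by
    intro j _ hj
    simpa using Finsupp.notMem_support_iff.mp hj)).symm

/-- every exponent vector in the support of Q has a positive entry in [1, n-2] -/
lemma Q_supp_small (hn : 2 ≤ n) {u : Fin (n+1) →₀ ℕ} (hu : u ∈ (Q k n d).support) :
    ∃ j : Fin (n+1), 1 ≤ (j : ℕ) ∧ (j : ℕ) ≤ n - 2 ∧ u j ≠ 0 := by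
  obtain ⟨Z, hZ⟩ := sub_dvd_pow_sub_pow (L k n) (X (pp n) + X (qq n)) (d - 3)
  have hQ : Q k n d = W k n * (L k n ^ 3 * Z) := by
    rw [Q, hZ]
    have hW : W k n = L k n - (X (pp n) + X (qq n)) := by
      rw [L_eq k hn]; ring
    rw [hW]; ring
  rw [hQ] at hu
  have := MvPolynomial.support_mul (W k n) (L k n ^ 3 * Z) hu
  rw [Finset.mem_add] at this
  obtain ⟨v, hv, w, hw, rfl⟩ := this
  have := MvPolynomial.support_sum hv
  rw [Finset.mem_biUnion] at this
  obtain ⟨j, hj, hv'⟩ := this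
  rw [MvPolynomial.support_X, Finset.mem_singleton] at hv'
  simp only [S, Finset.mem_filter] at hj
  refine ⟨j, hj.2.1, hj.2.2, ?_⟩
  subst hv'
  simp [Finsupp.single_apply]

end Prop46Aux

namespace Prop46Aux

variable (k : Type*) [Field k] [CharZero k] {n : ℕ} (d : ℕ)

variable (n) in
/-- the substitution -/
noncomputable def phi : Fin (n + 1) → MvPolynomial (Fin (n + 1)) k := fun i =>
  if i = 0 then (∑ j ∈ Finset.univ \ {0}, X j : MvPolynomial (Fin (n + 1)) k) else X i

lemma aeval_prod_X (a : Fin (n+1) → ℕ) :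
    aeval (phi k n) (∏ i, (X i : MvPolynomial (Fin (n+1)) k) ^ a i)
      = L k n ^ a 0 * ∏ j ∈ Finset.univ \ {0}, (X j : MvPolynomial (Fin (n+1)) k) ^ a j := by
  rw [map_prod]
  simp only [map_pow, aeval_X]
  rw [Finset.prod_eq_mul_prod_sdiff_singleton_of_mem (Finset.mem_univ (0 : Fin (n+1)))
    (fun i => phi k n i ^ a i)]
  have h1 : phi k n 0 = L k n := by simp [phi, L]
  have h2 : ∀ j ∈ Finset.univ \ {(0:Fin (n+1))}, phi k n j ^ a j
      = (X j : MvPolynomial (Fin (n+1)) k) ^ a j := by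
    intro j hj
    simp only [Finset.mem_sdiff, Finset.mem_singleton] at hj
    simp [phi, hj.2]
  rw [h1, Finset.prod_congr rfl h2]

lemma aeval_prod_X_of_zero (a : Fin (n+1) → ℕ) (ha : a 0 = 0) :
    aeval (phi k n) (∏ i, (X i : MvPolynomial (Fin (n+1)) k) ^ a i)
      = ∏ i, (X i : MvPolynomial (Fin (n+1)) k) ^ a i := by
  rw [aeval_prod_X, ha, pow_zero, one_mul,
    Finset.prod_eq_mul_prod_sdiff_singleton_of_mem (Finset.mem_univ (0 : Fin (n+1)))]
  rw [ha, pow_zero, one_mul]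

variable (n) in
def a0 : Fin (n+1) → ℕ := fun j => if j = 0 then d else 0

variable (n) in
def bb (i : ℕ) : Fin (n+1) → ℕ := fun j =>
  if j = 0 then 3 else if j = pp n then i else if j = qq n then d - 3 - i else 0

lemma aeval_a0 :
    aeval (phi k n) (∏ i, (X i : MvPolynomial (Fin (n+1)) k) ^ a0 n d i) = L k n ^ d := by
  rw [aeval_prod_X]
  have : ∀ j ∈ Finset.univ \ {(0 : Fin (n+1))},
      (X j : MvPolynomial (Fin (n+1)) k) ^ a0 n d j = 1 := by
    intro j hj
    simp only [Finset.mem_sdiff, Finset.mem_singleton] at hj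
    simp [a0, hj.2]
  rw [Finset.prod_congr rfl this]
  simp [a0]

lemma aeval_bb (hn : 2 ≤ n) (i : ℕ) :
    aeval (phi k n) (∏ j, (X j : MvPolynomial (Fin (n+1)) k) ^ bb n d i j)
      = L k n ^ 3 * (X (pp n) ^ i * X (qq n) ^ (d - 3 - i)) := by
  rw [aeval_prod_X]
  have hsub : ({pp n, qq n} : Finset (Fin (n+1))) ⊆ Finset.univ \ {0} := by
    intro j hj
    simp only [Finset.mem_insert, Finset.mem_singleton] at hj
    simp only [Finset.mem_sdiff, Finset.mem_univ, Finset.mem_singleton, true_and]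
    rcases hj with rfl | rfl
    · exact hp0 hn
    · exact hq0 hn
  have hout : ∀ j ∈ Finset.univ \ {(0:Fin (n+1))}, j ∉ ({pp n, qq n} : Finset (Fin (n+1))) →
      (X j : MvPolynomial (Fin (n+1)) k) ^ bb n d i j = 1 := by
    intro j hj hj'
    simp only [Finset.mem_insert, Finset.mem_singleton, not_or] at hj'
    simp only [Finset.mem_sdiff, Finset.mem_singleton] at hj
    simp [bb, hj.2, hj'.1, hj'.2]
  have hp : ∏ j ∈ Finset.univ \ {(0:Fin (n+1))}, (X j : MvPolynomial (Fin (n+1)) k) ^ bb n d i j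
      = ∏ j ∈ ({pp n, qq n} : Finset (Fin (n+1))), (X j : MvPolynomial (Fin (n+1)) k) ^ bb n d i j :=
    (Finset.prod_subset hsub hout).symm
  rw [hp, Finset.prod_pair (hpq hn)]
  have hb0 : bb n d i 0 = 3 := by simp [bb]
  have hbp : bb n d i (pp n) = i := by simp [bb, hp0 hn]
  have hbq : bb n d i (qq n) = d - 3 - i := by simp [bb, hq0 hn, (hpq hn).symm, Ne.symm (hpq hn)]
  rw [hb0, hbp, hbq]

end Prop46Aux

namespace Prop46Aux

variable (k : Type*) [Field k] [CharZero k] {n : ℕ} (d : ℕ)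

lemma key (hd : 4 ≤ d) :
    (∑ i ∈ Finset.range (d-2), (((d-3).choose i : k)) •
        (L k n ^ 3 * (X (pp n) ^ i * X (qq n) ^ (d-3-i))))
      = L k n ^ d - Q k n d := by
  have hrange : d - 2 = (d - 3) + 1 := by omega
  have hpow : (X (pp n) + X (qq n) : MvPolynomial (Fin (n+1)) k) ^ (d-3)
      = ∑ i ∈ Finset.range (d-2), X (pp n) ^ i * X (qq n) ^ (d-3-i)
          * ((d-3).choose i : MvPolynomial (Fin (n+1)) k) := by
    rw [hrange]
    exact (Commute.all _ _).add_pow (d-3)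
  have hsmul : ∀ i, (((d-3).choose i : k)) • (L k n ^ 3 * (X (pp n) ^ i * X (qq n) ^ (d-3-i)))
      = L k n ^ 3 * (X (pp n) ^ i * X (qq n) ^ (d-3-i)
          * ((d-3).choose i : MvPolynomial (Fin (n+1)) k)) := by
    intro i
    rw [smul_eq_C_mul, map_natCast]
    ring
  simp only [hsmul]
  rw [← Finset.mul_sum, ← hpow, Q]
  have hLd : L k n ^ d = L k n ^ 3 * L k n ^ (d-3) := by
    rw [← pow_add]
    congr 1
    omega
  rw [hLd]
  ring

lemma sum_bb (hn : 2 ≤ n) (hd : 4 ≤ d) {i : ℕ} (hi : i ≤ d - 3) :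
    ∑ j, bb n d i j = d := by
  rw [Finset.sum_eq_add_sum_sdiff_singleton_of_mem (Finset.mem_univ (0 : Fin (n+1)))]
  have hsub : ({pp n, qq n} : Finset (Fin (n+1))) ⊆ Finset.univ \ {0} := by
    intro j hj
    simp only [Finset.mem_insert, Finset.mem_singleton] at hj
    simp only [Finset.mem_sdiff, Finset.mem_univ, Finset.mem_singleton, true_and]
    rcases hj with rfl | rfl
    · exact hp0 hn
    · exact hq0 hn
  have hout : ∀ j ∈ Finset.univ \ {(0:Fin (n+1))}, j ∉ ({pp n, qq n} : Finset (Fin (n+1))) →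
      bb n d i j = 0 := by
    intro j hj hj'
    simp only [Finset.mem_insert, Finset.mem_singleton, not_or] at hj'
    simp only [Finset.mem_sdiff, Finset.mem_singleton] at hj
    simp [bb, hj.2, hj'.1, hj'.2]
  rw [← Finset.sum_subset hsub hout, Finset.sum_pair (hpq hn)]
  have hb0 : bb n d i 0 = 3 := by simp [bb]
  have hbp : bb n d i (pp n) = i := by simp [bb, hp0 hn]
  have hbq : bb n d i (qq n) = d - 3 - i := by simp [bb, hq0 hn, Ne.symm (hpq hn)]
  rw [hb0, hbp, hbq]
  omega

lemma monomial_eq_prod (u : Fin (n+1) →₀ ℕ) :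
    (monomial u (1 : k)) = ∏ i, (X i : MvPolynomial (Fin (n+1)) k) ^ u i := by
  rw [monomial_eq, C_1, one_mul, Finsupp.prod_pow]

end Prop46Aux

open Prop46Aux
theorem stmt_12 (k : Type*) [Field k] [CharZero k] (n d : ℕ) (hn : 2 ≤ n) (hd : 4 ≤ d) :
    ∃ (T : Finset (Fin (n + 1) → ℕ)) (c : (Fin (n + 1) → ℕ) → k),
      (↑T ⊆ ({a : Fin (n + 1) → ℕ | ∃ i, a = fun j => if j = i then d else 0}
        ∪ {a | (∑ j, a j = d) ∧ ∃ t : Fin (n + 1), 1 ≤ (t : ℕ) ∧ (t : ℕ) ≤ n - 2 ∧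
            1 ≤ a t ∧ ∀ j, a j ≠ 0 → (t : ℕ) ≤ (j : ℕ)}
        ∪ {a | (∑ j, a j = d) ∧ a 0 = 3 ∧
            ∀ j, a j ≠ 0 → j = 0 ∨ n - 1 ≤ (j : ℕ)})) ∧
      (∃ a ∈ T, c a ≠ 0) ∧
      (∑ a ∈ T, c a • (aeval (fun i : Fin (n + 1) =>
          if i = 0 then (∑ j ∈ Finset.univ \ {0}, X j : MvPolynomial (Fin (n + 1)) k)
          else X i)
        (∏ i, (X i : MvPolynomial (Fin (n + 1)) k) ^ a i))) = 0 := by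
  classical
  set T1 : Finset (Fin (n + 1) → ℕ) := {a0 n d} with hT1
  set T2 : Finset (Fin (n + 1) → ℕ) := (Finset.range (d-2)).image (bb n d) with hT2
  set T3 : Finset (Fin (n + 1) → ℕ) :=
    (Q k n d).support.image (fun u : Fin (n + 1) →₀ ℕ => ⇑u) with hT3
  refine ⟨(T1 ∪ T2) ∪ T3,
    fun a => if a 0 = d then 1 else if a 0 = 3 then -(((d-3).choose (a (pp n))) : k)
      else -(MvPolynomial.coeff (Finsupp.equivFunOnFinite.symm a) (Q k n d)), ?_, ?_, ?_⟩
  · -- subset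
    intro a ha
    simp only [Finset.coe_union, Set.mem_union, Finset.mem_coe, Finset.mem_union] at ha ⊢
    rcases ha with (ha | ha) | ha
    · left; left
      rw [hT1, Finset.mem_singleton] at ha
      exact ⟨0, ha⟩
    · right
      rw [hT2, Finset.mem_image] at ha
      obtain ⟨i, hi, rfl⟩ := ha
      rw [Finset.mem_range] at hi
      refine ⟨sum_bb d hn hd (by omega), by simp [bb], ?_⟩
      intro j hj
      by_cases h0 : j = 0
      · exact Or.inl h0
      by_cases hp : j = pp n
      · right; subst hp; simp [pp]
      by_cases hq : j = qq n
      · right; subst hq; simp [qq]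
      · exfalso; apply hj; simp [bb, h0, hp, hq]
    · left; right
      rw [hT3, Finset.mem_image] at ha
      obtain ⟨u, hu, rfl⟩ := ha
      obtain ⟨j0, hj1, hj2, hj3⟩ := Q_supp_small k d hn hu
      have hs : j0 ∈ Finset.univ.filter (fun j => u j ≠ 0) := by
        simp [hj3]
      set s := Finset.univ.filter (fun j => u j ≠ 0) with hsdef
      have hne : s.Nonempty := ⟨j0, hs⟩
      set t := s.min' hne with ht
      have htmem : t ∈ s := s.min'_mem hne
      have htne : u t ≠ 0 := by
        rw [hsdef] at htmem
        simpa using htmem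
      refine ⟨Q_supp_deg k d hd hu, t, ?_, ?_, ?_, ?_⟩
      · -- 1 ≤ t
        by_contra h
        have h0 : t = 0 := by
          rw [Fin.ext_iff, Fin.val_zero]; omega
        rw [h0] at htne
        exact htne (Q_supp_zero k d hn hu)
      · -- t ≤ n - 2
        have := s.min'_le j0 hs
        rw [← ht] at this
        exact le_trans this hj2
      · omega
      · intro j hj
        exact s.min'_le j (by simp [hsdef, hj])
  · -- nonzero coefficient
    refine ⟨a0 n d, ?_, ?_⟩
    · simp [hT1, Finset.mem_union]
    · simp [a0]
  · -- the linear relation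
    have hphi : (fun i : Fin (n + 1) =>
        if i = 0 then (∑ j ∈ Finset.univ \ {0}, X j : MvPolynomial (Fin (n + 1)) k)
        else X i) = phi k n := rfl
    rw [hphi]
    have hd12 : Disjoint T1 T2 := by
      rw [Finset.disjoint_left]
      intro a ha ha'
      rw [hT1, Finset.mem_singleton] at ha
      rw [hT2, Finset.mem_image] at ha'
      obtain ⟨i, _, hbi⟩ := ha'
      have : a0 n d 0 = bb n d i 0 := by rw [← ha, hbi]
      simp [a0, bb] at this
      omega
    have hd123 : Disjoint (T1 ∪ T2) T3 := by
      rw [Finset.disjoint_left]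
      intro a ha ha'
      rw [hT3, Finset.mem_image] at ha'
      obtain ⟨u, hu, hua⟩ := ha'
      have hu0 : a 0 = 0 := by rw [← hua]; exact Q_supp_zero k d hn hu
      rw [Finset.mem_union] at ha
      rcases ha with ha | ha
      · rw [hT1, Finset.mem_singleton] at ha
        rw [ha] at hu0; simp [a0] at hu0; omega
      · rw [hT2, Finset.mem_image] at ha
        obtain ⟨i, _, hbi⟩ := ha
        rw [← hbi] at hu0; simp [bb] at hu0
    rw [Finset.sum_union hd123, Finset.sum_union hd12]
    -- T1 part
    have e1 : ∑ a ∈ T1, (if a 0 = d then (1:k) else if a 0 = 3 then -(((d-3).choose (a (pp n))) : k)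
        else -(MvPolynomial.coeff (Finsupp.equivFunOnFinite.symm a) (Q k n d))) •
          aeval (phi k n) (∏ i, (X i : MvPolynomial (Fin (n+1)) k) ^ a i)
        = L k n ^ d := by
      rw [hT1, Finset.sum_singleton]
      have h1 : a0 n d 0 = d := by simp [a0]
      rw [h1, if_pos rfl, one_smul, aeval_a0]
    -- T2 part
    have e2 : ∑ a ∈ T2, (if a 0 = d then (1:k) else if a 0 = 3 then -(((d-3).choose (a (pp n))) : k)
        else -(MvPolynomial.coeff (Finsupp.equivFunOnFinite.symm a) (Q k n d))) •
          aeval (phi k n) (∏ i, (X i : MvPolynomial (Fin (n+1)) k) ^ a i)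
        = -(L k n ^ d - Q k n d) := by
      rw [hT2, Finset.sum_image (by
        intro i hi j hj h
        have : bb n d i (pp n) = bb n d j (pp n) := by rw [h]
        simpa [bb, hp0 hn] using this)]
      rw [← key k d hd, ← Finset.sum_neg_distrib]
      apply Finset.sum_congr rfl
      intro i hi
      have h0 : bb n d i 0 = 3 := by simp [bb]
      have hp : bb n d i (pp n) = i := by simp [bb, hp0 hn]
      rw [h0, if_neg (by omega), if_pos rfl, hp, aeval_bb k d hn i, neg_smul]
    -- T3 part
    have e3 : ∑ a ∈ T3, (if a 0 = d then (1:k) else if a 0 = 3 then -(((d-3).choose (a (pp n))) : k)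
        else -(MvPolynomial.coeff (Finsupp.equivFunOnFinite.symm a) (Q k n d))) •
          aeval (phi k n) (∏ i, (X i : MvPolynomial (Fin (n+1)) k) ^ a i)
        = -(Q k n d) := by
      rw [hT3, Finset.sum_image (by
        intro u hu v hv h
        exact DFunLike.coe_injective h)]
      have : ∀ u ∈ (Q k n d).support,
          (if (u : Fin (n+1) → ℕ) 0 = d then (1:k)
            else if (u : Fin (n+1) → ℕ) 0 = 3 then -(((d-3).choose (u (pp n))) : k)
            else -(MvPolynomial.coeff (Finsupp.equivFunOnFinite.symm (⇑u)) (Q k n d))) •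
            aeval (phi k n) (∏ i, (X i : MvPolynomial (Fin (n+1)) k) ^ u i)
          = -(monomial u (MvPolynomial.coeff u (Q k n d))) := by
        intro u hu
        have hu0 : u 0 = 0 := Q_supp_zero k d hn hu
        rw [hu0, if_neg (by omega), if_neg (by omega), Finsupp.equivFunOnFinite_symm_coe,
          aeval_prod_X_of_zero k (⇑u) hu0, ← monomial_eq_prod, smul_monomial]
        rw [smul_eq_mul, mul_one]
        exact map_neg _ _
      rw [Finset.sum_congr rfl this, Finset.sum_neg_distrib]
      congr 1
      exact support_sum_monomial_coeff (Q k n d)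
    rw [e1, e2, e3]
    ring
end

section
/- Let n ≥ 5 and char k = 0. If m_1, …, m_n are monomials of degree 3 in k[x_0,…,x_n] such that the 2n+1 monomials x_0^3, …, x_n^3, m_1, …, m_n are k-linearly dependent modulo x_0 + ⋯ + x_n, and no proper subset of these monomials together with all x_i^3 has this dependence property, then up to a permutation of the variables {m_1,…,m_n} = {x_0^2 x_1, x_0^2 x_2, …, x_0^2 x_n}. -/
/-!
Write `ℓ = x_0 + ⋯ + x_n`. If `∑ c_t x_t³ + ∑ b_j m_j = ℓ q`, minimality forces every
`b_j ≠ 0`, so the non-cube cubic monomials of `ℓ q` are exactly the `m_j`: there are `n` of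
them, one fewer than the variables. Writing `f u v` for the coefficient of `x_u x_v` in `q`,
the coefficient of `x_u² x_v` in `ℓ q` is `f u u + f u v` and that of `x_u x_v x_w` is
`f u v + f u w + f v w`.

Join `u` and `v` when `x_u² x_v` or `x_v² x_u` occurs in `ℓ q`. This graph has fewer edges than
vertices, so some vertex `u₀` has at most one neighbour, and `u`, `v` are joined whenever
`f u u ≠ f v v`. If the diagonal `f u u` is constant, a count of the surviving monomials gives
at least `n + 1` of them (for a nonzero diagonal this needs `n ≥ 5`). Otherwise the diagonal
is constant off a single vertex `t`, which is joined to all others; these `n` edges account for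
all monomials of `ℓ q`, every other coefficient vanishes, and this forces the monomials to be
the `x_t² x_v`.
-/

open MvPolynomial Finset
open Finsupp (single)

namespace Togliatti

variable {ι k : Type*}

lemma forall_ne_zero_of_minimal {α β J : Type*} [Zero α] [Zero β] [Fintype J]
    {P : α → (J → β) → Prop} {c : α} {b : J → β} (hcb : c ≠ 0 ∨ b ≠ 0)
    (hP : P c b)
    (hmin : ∀ S : Finset J, S ≠ univ →
      ¬∃ c b, (c ≠ 0 ∨ ∃ j ∈ S, b j ≠ 0) ∧ (∀ j ∉ S, b j = 0) ∧ P c b) :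
    ∀ j, b j ≠ 0 := by
  classical
  intro j₀ hj₀
  refine hmin {j | b j ≠ 0} (fun h => by simpa [hj₀] using Finset.ext_iff.1 h j₀)
    ⟨c, b, ?_, fun j hj => by simpa using hj, hP⟩
  refine hcb.imp_right fun hb => ?_
  obtain ⟨j, hj⟩ := Function.ne_iff.1 hb
  exact ⟨j, by simpa using hj, hj⟩

noncomputable def sqMon (u v : ι) : ι →₀ ℕ := single u 2 + single v 1

noncomputable def sqfreeMon (u v w : ι) : ι →₀ ℕ := single u 1 + single v 1 + single w 1

lemma degree_sqMon (u v : ι) : (sqMon u v).degree = 3 := by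
  simp [sqMon, map_add]

lemma degree_sqfreeMon (u v w : ι) : (sqfreeMon u v w).degree = 3 := by
  simp [sqfreeMon, map_add]

noncomputable def sqGraph (M : Finset (ι →₀ ℕ)) : SimpleGraph ι :=
  SimpleGraph.fromRel fun u v => sqMon u v ∈ M

lemma sqGraph_adj {M : Finset (ι →₀ ℕ)} {u v : ι} :
    (sqGraph M).Adj u v ↔ u ≠ v ∧ (sqMon u v ∈ M ∨ sqMon v u ∈ M) :=
  SimpleGraph.fromRel_adj _ u v

section Combinatorics

variable [DecidableEq ι]

lemma sqMon_apply (u v s : ι) :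
    sqMon u v s = (if s = u then 2 else 0) + (if s = v then 1 else 0) := by
  simp [sqMon, Finsupp.single_apply, eq_comm]

lemma sqfreeMon_apply (u v w s : ι) :
    sqfreeMon u v w s =
      (if s = u then 1 else 0) + (if s = v then 1 else 0) + (if s = w then 1 else 0) := by
  simp [sqfreeMon, Finsupp.single_apply, eq_comm]

lemma sqMon_injective {u v u' v' : ι} (huv : u ≠ v) (h : sqMon u v = sqMon u' v') :
    u = u' ∧ v = v' := by
  have hu := DFunLike.congr_fun h u
  have hv := DFunLike.congr_fun h v
  simp only [sqMon_apply] at hu hv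
  constructor <;> by_contra <;> split_ifs at hu hv <;> simp_all

lemma sqMon_ne_sqfreeMon {u v a b c : ι} (huv : u ≠ v) (hab : a ≠ b) (hac : a ≠ c)
    (hbc : b ≠ c) : sqMon u v ≠ sqfreeMon a b c := by
  intro h
  have hu := DFunLike.congr_fun h u
  simp only [sqMon_apply, sqfreeMon_apply] at hu
  split_ifs at hu <;> simp_all

lemma support_sqMon {u v : ι} (huv : u ≠ v) : (sqMon u v).support = {u, v} :=
  Finsupp.support_single_add_single huv two_ne_zero one_ne_zero

lemma support_sqfreeMon {u v w : ι} (huv : u ≠ v) (huw : u ≠ w) (hvw : v ≠ w) :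
    (sqfreeMon u v w).support = {u, v, w} := by
  ext s
  simp only [Finsupp.mem_support_iff, sqfreeMon_apply, mem_insert, mem_singleton]
  split_ifs <;> simp_all

lemma sqMon_ne_single {u v : ι} (huv : u ≠ v) (t : ι) : sqMon u v ≠ single t 3 := by
  intro h
  have := DFunLike.congr_fun h v
  simp only [sqMon_apply, Finsupp.single_apply] at this
  split_ifs at this <;> simp_all

lemma sqfreeMon_ne_single {u v w : ι} (huv : u ≠ v) (huw : u ≠ w) (t : ι) :
    sqfreeMon u v w ≠ single t 3 := by
  intro h
  have := DFunLike.congr_fun h u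
  simp only [sqfreeMon_apply, Finsupp.single_apply] at this
  split_ifs at this <;> simp_all

lemma injOn_of_apply_self {s : Finset ι} {θ : ι → ι →₀ ℕ}
    (hself : ∀ x ∈ s, θ x x ≠ 0)
    (hother : ∀ x ∈ s, ∀ y ∈ s, x ≠ y → θ y x = 0) :
    Set.InjOn θ s := by
  intro x hx y hy hxy
  by_contra hne
  exact hself x hx (hxy ▸ hother x hx y hy hne)

lemma exists_eq_single_add_single {ν : ι →₀ ℕ} (h : ν.degree = 2) :
    ∃ a b, ν = single a 1 + single b 1 := by
  have hcard : Multiset.card (Finsupp.toMultiset ν) = 2 := by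
    rw [Finsupp.card_toMultiset, ← h]; rfl
  obtain ⟨a, b, hab⟩ := Multiset.card_eq_two.1 hcard
  refine ⟨a, b, ?_⟩
  rw [← Finsupp.toMultiset_toFinsupp ν, hab, Multiset.insert_eq_cons, ← Multiset.singleton_add,
    Multiset.toFinsupp_add, Multiset.toFinsupp_singleton, Multiset.toFinsupp_singleton]

lemma choose_two_le_card {M : Finset (ι →₀ ℕ)} {u₀ : ι} {U : Finset ι} (hU : u₀ ∉ U)
    (h : ∀ v ∈ U, ∀ w ∈ U, v ≠ w → sqMon v w ∈ M ∨ sqfreeMon u₀ v w ∈ M) :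
    (#U).choose 2 ≤ #M := by
  rw [← card_powersetCard]
  refine card_le_card_of_surjOn (fun μ => μ.support.erase u₀) fun A hA => ?_
  obtain ⟨hAU, hA2⟩ := mem_powersetCard.1 hA
  obtain ⟨v, w, hvw, rfl⟩ := card_eq_two.1 hA2
  have hv : v ∈ U := hAU (by simp)
  have hw : w ∈ U := hAU (by simp)
  have hvu : u₀ ≠ v := by rintro rfl; exact hU hv
  have hwu : u₀ ≠ w := by rintro rfl; exact hU hw
  rcases h v hv w hw hvw with h | h
  · exact ⟨_, h, by simp [support_sqMon hvw, hvu, hwu]⟩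
  · refine ⟨_, h, ?_⟩
    simp [support_sqfreeMon hvu hwu hvw, hvu, hwu]

lemma sqMon_comp_perm (σ : Equiv.Perm ι) (u v : ι) :
    ⇑(sqMon u v) ∘ σ = ⇑(sqMon (σ.symm u) (σ.symm v)) := by
  ext s
  simp [sqMon_apply, Equiv.eq_symm_apply]

variable [Fintype ι]

lemma card_edgeFinset_sqGraph_le (M : Finset (ι →₀ ℕ)) [DecidableRel (sqGraph M).Adj] :
    #(sqGraph M).edgeFinset ≤ #M := by
  let A := univ.offDiag.filter fun p : ι × ι => sqMon p.1 p.2 ∈ M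
  have hA : #A ≤ #M := by
    refine card_le_card_of_injOn (fun p => sqMon p.1 p.2) (fun p hp => (mem_filter.1 hp).2) ?_
    rintro ⟨u, v⟩ hp ⟨u', v'⟩ - h
    obtain ⟨rfl, rfl⟩ := sqMon_injective (mem_offDiag.1 (mem_filter.1 hp).1).2.2 h
    rfl
  refine le_trans (card_le_card_of_surjOn (fun p : ι × ι => s(p.1, p.2)) ?_) hA
  intro e he
  induction e using Sym2.ind with
  | h u v =>
    obtain ⟨huv, h | h⟩ := sqGraph_adj.1 (by simpa using he)
    · exact ⟨(u, v), by simp [A, huv, h], rfl⟩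
    · exact ⟨(v, u), by simp [A, Ne.symm huv, h], Sym2.eq_swap⟩

lemma exists_adj_subsingleton (M : Finset (ι →₀ ℕ)) (hM : #M < Fintype.card ι) :
    ∃ u₀, ∀ v w, (sqGraph M).Adj u₀ v → (sqGraph M).Adj u₀ w → v = w := by
  classical
  by_contra! h
  have hdeg : ∀ u, 2 ≤ (sqGraph M).degree u := by
    intro u
    obtain ⟨v, w, hv, hw, hvw⟩ := h u
    rw [← SimpleGraph.card_neighborFinset_eq_degree, ← card_pair hvw]
    exact card_le_card (by simp [insert_subset_iff, hv, hw])
  have := (sqGraph M).sum_degrees_eq_twice_card_edges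
  have := card_edgeFinset_sqGraph_le M
  have : ∑ _u : ι, 2 ≤ ∑ u, (sqGraph M).degree u := sum_le_sum fun u _ => hdeg u
  rw [sum_const, card_univ, smul_eq_mul] at this
  omega

lemma exists_eq_sqMon_of_forall_adj {M : Finset (ι →₀ ℕ)} (hM : #M < Fintype.card ι)
    {t : ι} (ht : ∀ v ≠ t, (sqGraph M).Adj t v) :
    ∀ μ ∈ M, ∃ v ≠ t, μ = sqMon t v ∨ μ = sqMon v t := by
  classical
  let θ v := if sqMon t v ∈ M then sqMon t v else sqMon v t
  have hθM : ∀ v ∈ univ.erase t, θ v ∈ M := by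
    intro v hv
    obtain ⟨-, h | h⟩ := sqGraph_adj.1 (ht v (ne_of_mem_erase hv))
    · simp [θ, h]
    · unfold θ; split_ifs <;> assumption
  have hinj : Set.InjOn θ (univ.erase t) := by
    refine injOn_of_apply_self (fun x hx => ?_) (fun x hx y hy hxy => ?_)
    · have := ne_of_mem_erase hx
      simp only [θ]; split_ifs <;> simp [sqMon_apply, this]
    · have := ne_of_mem_erase hx
      simp only [θ]; split_ifs <;> simp [sqMon_apply, this, hxy]
  have hstar : (univ.erase t).image θ = M := by
    refine eq_of_subset_of_card_le (image_subset_iff.2 hθM) ?_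
    rw [card_image_of_injOn hinj, card_erase_of_mem (mem_univ t), card_univ]
    omega
  intro μ hμ
  obtain ⟨v, hv, rfl⟩ := mem_image.1 (hstar ▸ hμ)
  refine ⟨v, ne_of_mem_erase hv, ?_⟩
  simp only [θ]; split_ifs <;> simp

lemma card_le_of_forall_sqMon_or {M : Finset (ι →₀ ℕ)} {a b : ι} (hab : a ≠ b)
    (ha : sqMon a b ∈ M) (hb : sqMon b a ∈ M)
    (h : ∀ x, x ≠ a → x ≠ b →
      sqMon a x ∈ M ∨ sqMon b x ∈ M ∨ sqfreeMon a b x ∈ M) :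
    Fintype.card ι ≤ #M := by
  classical
  let θ x := if sqMon a x ∈ M then sqMon a x else if sqMon b x ∈ M then sqMon b x
    else sqfreeMon a b x
  let s := univ \ {a, b}
  have hs : ∀ x ∈ s, x ≠ a ∧ x ≠ b := by simp [s]
  have hθ : ∀ x ∈ s,
      θ x ∈ M ∧ θ x x = 1 ∧ ∀ z, z ≠ a → z ≠ b → z ≠ x → θ x z = 0 := by
    intro x hx
    obtain ⟨hxa, hxb⟩ := hs x hx
    simp only [θ]
    split_ifs with h₁ h₂
    · simp [h₁, sqMon_apply, hxa]; tauto
    · simp [h₂, sqMon_apply, hxb]; tauto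
    · refine ⟨by simpa [h₁, h₂] using h x hxa hxb, ?_⟩
      simp [sqfreeMon_apply, hxa, hxb]; tauto
  have hinj : Set.InjOn θ s := injOn_of_apply_self (fun x hx => by simp [(hθ x hx).2.1])
    fun x hx y hy hxy => (hθ y hy).2.2 x (hs x hx).1 (hs x hx).2 hxy
  have hnot : ∀ μ ∈ s.image θ, μ ≠ sqMon a b ∧ μ ≠ sqMon b a := by
    simp only [mem_image, forall_exists_index, and_imp]
    rintro _ x hx rfl
    have := (hθ x hx).2.1
    constructor <;> rintro h <;> simp [h, sqMon_apply, (hs x hx).1, (hs x hx).2] at this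
  have hsub : insert (sqMon a b) (insert (sqMon b a) (s.image θ)) ⊆ M := by
    simp only [insert_subset_iff, image_subset_iff]
    exact ⟨ha, hb, fun x hx => (hθ x hx).1⟩
  have hcard := card_le_card hsub
  rw [card_insert_of_notMem, card_insert_of_notMem fun h => (hnot _ h).2 rfl,
    card_image_of_injOn hinj, card_sdiff_of_subset (subset_univ _), card_univ,
    card_pair hab] at hcard
  · omega
  · simp only [mem_insert, not_or]
    exact ⟨fun h => hab (sqMon_injective hab h).1, fun h => (hnot _ h).1 rfl⟩

lemma range_eq_image_sqMon {J : Type*} [Fintype J] (m : J → ι → ℕ) {t : ι}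
    (hcard : Fintype.card ι = Fintype.card J + 1)
    (ht : ∀ v ≠ t, sqMon t v ∈ univ.image (Finsupp.equivFunOnFinite.symm ∘ m)) :
    Set.range m = (fun v => ⇑(sqMon t v)) '' {v | v ≠ t} := by
  set μ := Finsupp.equivFunOnFinite.symm ∘ m
  have hμ : ∀ j, ⇑(μ j) = m j := fun j => Finsupp.coe_equivFunOnFinite_symm (m j)
  have hstar : (univ.erase t).image (sqMon t) = univ.image μ := by
    refine eq_of_subset_of_card_le (image_subset_iff.2 fun v hv => ht v (ne_of_mem_erase hv)) ?_
    rw [card_image_of_injOn fun v hv w _ h => (sqMon_injective (ne_of_mem_erase hv).symm h).2,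
      card_erase_of_mem (mem_univ t), card_univ, hcard, Nat.add_sub_cancel]
    exact card_image_le
  ext a
  simp only [Set.mem_range, Set.mem_image, Set.mem_ofPred_eq]
  constructor
  · rintro ⟨j, rfl⟩
    obtain ⟨v, hv, hvj⟩ := mem_image.1 (hstar ▸ mem_image_of_mem μ (mem_univ j))
    exact ⟨v, ne_of_mem_erase hv, by rw [hvj, hμ]⟩
  · rintro ⟨v, hv, rfl⟩
    obtain ⟨j, -, hj⟩ :=
      mem_image.1 (hstar ▸ mem_image_of_mem (sqMon t) (mem_erase.2 ⟨hv, mem_univ v⟩))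
    exact ⟨j, by rw [← hμ, hj]⟩

end Combinatorics

section Polynomial

variable [Field k]

noncomputable def pairCoeff (q : MvPolynomial ι k) (u v : ι) : k :=
  coeff (single u 1 + single v 1) q

lemma pairCoeff_comm (q : MvPolynomial ι k) (u v : ι) : pairCoeff q u v = pairCoeff q v u := by
  rw [pairCoeff, add_comm, pairCoeff]

variable [Fintype ι]

lemma prod_univ_X_pow_eq_monomial (μ : ι →₀ ℕ) :
    (∏ s, X s ^ μ s : MvPolynomial ι k) = monomial μ 1 := by
  rw [← prod_X_pow_eq_monomial, ← Finsupp.prod_pow]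
  rfl

variable [DecidableEq ι]

noncomputable def mixedCubics (p : MvPolynomial ι k) : Finset (ι →₀ ℕ) :=
  {μ ∈ p.support | μ.degree = 3 ∧ ∀ t, μ ≠ single t 3}

lemma mem_mixedCubics {p : MvPolynomial ι k} {μ : ι →₀ ℕ} :
    μ ∈ mixedCubics p ↔ coeff μ p ≠ 0 ∧ μ.degree = 3 ∧ ∀ t, μ ≠ single t 3 := by
  simp [mixedCubics]

lemma mixedCubics_eq_image {J : Type*} [Fintype J] (c : ι → k) (b : J → k)
    (m : J → ι → ℕ) (hinj : Function.Injective m) (hdeg : ∀ j, ∑ s, m j s = 3)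
    (hcube : ∀ j t, m j ≠ fun s => if s = t then 3 else 0) (hb : ∀ j, b j ≠ 0) :
    mixedCubics (∑ t, c t • X t ^ 3 + ∑ j, b j • ∏ s, (X s : MvPolynomial ι k) ^ m j s) =
      univ.image (Finsupp.equivFunOnFinite.symm ∘ m) := by
  classical
  set E := ∑ t, c t • X t ^ 3 + ∑ j, b j • ∏ s, (X s : MvPolynomial ι k) ^ m j s
  set μ := Finsupp.equivFunOnFinite.symm ∘ m
  have hμ : ∀ j, ⇑(μ j) = m j := fun j => Finsupp.coe_equivFunOnFinite_symm (m j)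
  have hnot : ∀ j t, μ j ≠ single t 3 := fun j t h => hcube j t <| by
    ext s
    simp [← hμ, h, Finsupp.single_apply, eq_comm]
  have hcoeff : ∀ ν, coeff ν E =
      ∑ t, (if single t 3 = ν then c t else 0) + ∑ j, if μ j = ν then b j else 0 := by
    intro ν
    simp [E, coeff_sum, coeff_X_pow, ← hμ, prod_univ_X_pow_eq_monomial, coeff_monomial]
  ext ν
  rw [mem_mixedCubics, mem_image, hcoeff]
  constructor
  · rintro ⟨hne, -, hν⟩
    rw [sum_eq_zero fun t _ => if_neg fun h => hν t h.symm, zero_add] at hne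
    obtain ⟨j, -, hj⟩ := exists_ne_zero_of_sum_ne_zero hne
    exact ⟨j, mem_univ j, by_contra fun h => hj (if_neg h)⟩
  · rintro ⟨j, -, rfl⟩
    refine ⟨?_, by rw [Finsupp.degree_eq_sum, hμ, hdeg], hnot j⟩
    rw [sum_eq_zero fun t _ => if_neg fun h => hnot j t h.symm, zero_add,
      sum_eq_single j (fun i _ hi => if_neg fun h => hi (hinj (by rw [← hμ, ← hμ, h])))
        (by simp), if_pos rfl]
    exact hb j

variable (q : MvPolynomial ι k)

lemma coeff_sum_X_mul (μ : ι →₀ ℕ) :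
    coeff μ ((∑ t, X t) * q) = ∑ t ∈ μ.support, coeff (μ - single t 1) q := by
  simp_rw [sum_mul, coeff_sum, coeff_X_mul', sum_ite_mem, univ_inter]

lemma coeff_sqMon {u v : ι} (huv : u ≠ v) :
    coeff (sqMon u v) ((∑ t, X t) * q) = pairCoeff q u u + pairCoeff q u v := by
  have hu : sqMon u v - single u 1 = single u 1 + single v 1 := by
    rw [sqMon, ← one_add_one_eq_two, Finsupp.single_add, add_assoc, add_tsub_cancel_left]
  have hv : sqMon u v - single v 1 = single u 1 + single u 1 := by
    rw [sqMon, ← Finsupp.single_add, one_add_one_eq_two, add_tsub_cancel_right]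
  rw [coeff_sum_X_mul, support_sqMon huv, sum_pair huv, hu, hv, add_comm, pairCoeff, pairCoeff]

lemma coeff_sqfreeMon {u v w : ι} (huv : u ≠ v) (huw : u ≠ w) (hvw : v ≠ w) :
    coeff (sqfreeMon u v w) ((∑ t, X t) * q) =
      pairCoeff q u v + pairCoeff q u w + pairCoeff q v w := by
  have hu : sqfreeMon u v w - single u 1 = single v 1 + single w 1 := by
    rw [sqfreeMon, add_assoc, add_tsub_cancel_left]
  have hv : sqfreeMon u v w - single v 1 = single u 1 + single w 1 := by
    rw [sqfreeMon, add_right_comm, add_tsub_cancel_right]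
  have hw : sqfreeMon u v w - single w 1 = single u 1 + single v 1 := by
    rw [sqfreeMon, add_tsub_cancel_right]
  rw [coeff_sum_X_mul, support_sqfreeMon huv huw hvw, sum_insert (by simp [huv, huw]),
    sum_pair hvw, hu, hv, hw]
  simp only [pairCoeff]
  ring

lemma sqMon_mem_mixedCubics {u v : ι} (huv : u ≠ v) :
    sqMon u v ∈ mixedCubics ((∑ t, X t) * q) ↔ pairCoeff q u u + pairCoeff q u v ≠ 0 := by
  simp [mem_mixedCubics, coeff_sqMon q huv, degree_sqMon, sqMon_ne_single huv]

lemma sqfreeMon_mem_mixedCubics {u v w : ι} (huv : u ≠ v) (huw : u ≠ w) (hvw : v ≠ w) :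
    sqfreeMon u v w ∈ mixedCubics ((∑ t, X t) * q) ↔
      pairCoeff q u v + pairCoeff q u w + pairCoeff q v w ≠ 0 := by
  simp [mem_mixedCubics, coeff_sqfreeMon q huv huw hvw, degree_sqfreeMon,
    sqfreeMon_ne_single huv huw]

lemma mixedCubics_eq_empty (h : ∀ u v, pairCoeff q u v = 0) :
    mixedCubics ((∑ t, X t) * q) = ∅ := by
  refine eq_empty_of_forall_notMem fun μ hμ => ?_
  obtain ⟨hcoeff, hdeg, -⟩ := mem_mixedCubics.1 hμ
  rw [coeff_sum_X_mul] at hcoeff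
  obtain ⟨t, ht, hne⟩ := exists_ne_zero_of_sum_ne_zero hcoeff
  apply hne
  have hle : single t 1 ≤ μ := Finsupp.single_le_iff.2 (Nat.one_le_iff_ne_zero.2
    (Finsupp.mem_support_iff.1 ht))
  have hdeg2 : (μ - single t 1).degree = 2 := by
    have := congrArg Finsupp.degree (tsub_add_cancel_of_le hle)
    rw [map_add, Finsupp.degree_single] at this
    omega
  obtain ⟨a, b, hab⟩ := exists_eq_single_add_single hdeg2
  rw [hab]
  exact h a b

lemma sqGraph_adj_of_pairCoeff_ne {u v : ι} (huv : u ≠ v)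
    (h : pairCoeff q u u ≠ pairCoeff q v v) :
    (sqGraph (mixedCubics ((∑ t, X t) * q))).Adj u v := by
  rw [sqGraph_adj, sqMon_mem_mixedCubics q huv, sqMon_mem_mixedCubics q huv.symm,
    pairCoeff_comm q v u]
  refine ⟨huv, not_and_or.1 fun ⟨hu, hv⟩ => h ?_⟩
  linear_combination hu - hv

lemma pairCoeff_eq_neg_of_not_adj {u v : ι} (huv : u ≠ v)
    (h : ¬(sqGraph (mixedCubics ((∑ t, X t) * q))).Adj u v) :
    pairCoeff q u v = -pairCoeff q u u := by
  simp only [sqGraph_adj, not_and, not_or, sqMon_mem_mixedCubics q huv, not_not] at h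
  linear_combination (h huv).1

lemma diag_add_eq_zero_of_forall {f : ι → ι → k} [NeZero (2 : k)] [NeZero (3 : k)]
    (hsymm : ∀ a b, f a b = f b a) {t : ι} (hd : ∀ a b, a ≠ t → b ≠ t → f a a = f b b)
    (hsq : ∀ a b, a ≠ t → b ≠ t → a ≠ b → f a a + f a b = 0)
    (hsf : ∀ a b c, a ≠ b → a ≠ c → b ≠ c → f a b + f a c + f b c = 0)
    (h4 : 4 ≤ Fintype.card ι) {v : ι} (hv : v ≠ t) : f v v + f v t = 0 := by
  classical
  obtain ⟨a, ha, b, hb, hab⟩ : ∃ a ∈ univ \ {t, v}, ∃ b ∈ univ \ {t, v}, a ≠ b := by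
    rw [← one_lt_card, card_sdiff_of_subset (subset_univ _), card_univ, card_pair hv.symm]
    omega
  simp only [mem_sdiff, mem_univ, mem_insert, mem_singleton, true_and, not_or] at ha hb
  -- Off `t` every `f a b` equals `-f a a`, so the relation on `v, a, b` reads `-3 f v v = 0`;
  -- then the three relations through `t` give `2 f v t = 0`.
  have hvv : f v v = 0 := by
    have h3 : (3 : k) * f v v = 0 := by
      linear_combination hsq v a hv ha.1 (Ne.symm ha.2) + hsq v b hv hb.1 (Ne.symm hb.2)
        + hsq a b ha.1 hb.1 hab - hsf v a b (Ne.symm ha.2) (Ne.symm hb.2) hab + hd v a hv ha.1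
    exact (mul_eq_zero.1 h3).resolve_left (NeZero.ne 3)
  have h2 : (2 : k) * (f v v + f v t) = 0 := by
    linear_combination 2 * hsymm v t + hsf t v a hv.symm (Ne.symm ha.1) (Ne.symm ha.2)
      + hsf t v b hv.symm (Ne.symm hb.1) (Ne.symm hb.2)
      - hsf t a b (Ne.symm ha.1) (Ne.symm hb.1) hab
      - hsq v a hv ha.1 (Ne.symm ha.2) - hsq v b hv hb.1 (Ne.symm hb.2) + hsq a b ha.1 hb.1 hab
      - hd a v ha.1 hv + 3 * hvv
  exact (mul_eq_zero.1 h2).resolve_left (NeZero.ne 2)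

lemma false_of_pairCoeff_self_eq [NeZero (3 : k)] {e : k} (he : e ≠ 0)
    (hd : ∀ u, pairCoeff q u u = e) {u₀ : ι}
    (hu₀ : ∀ v w, (sqGraph (mixedCubics ((∑ t, X t) * q))).Adj u₀ v →
      (sqGraph (mixedCubics ((∑ t, X t) * q))).Adj u₀ w → v = w)
    (h6 : 6 ≤ Fintype.card ι) (hM : #(mixedCubics ((∑ t, X t) * q)) < Fintype.card ι) :
    False := by
  classical
  set M := mixedCubics ((∑ t, X t) * q)
  set U := (univ.erase u₀).filter fun v => ¬(sqGraph M).Adj u₀ v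
  have hU : Fintype.card ι - 2 ≤ #U := by
    let A := (univ.erase u₀).filter fun v => (sqGraph M).Adj u₀ v
    have hA : #A ≤ 1 :=
      card_le_one.2 fun v hv w hw => hu₀ v w (mem_filter.1 hv).2 (mem_filter.1 hw).2
    have hcover : univ.erase u₀ ⊆ U ∪ A := fun v hv => by
      by_cases h : (sqGraph M).Adj u₀ v <;> simp [U, A, h, ne_of_mem_erase hv]
    have := (card_le_card hcover).trans (card_union_le U A)
    rw [card_erase_of_mem (mem_univ _), card_univ] at this
    omega
  have hpair : ∀ v ∈ U, ∀ w ∈ U, v ≠ w →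
      sqMon v w ∈ M ∨ sqfreeMon u₀ v w ∈ M := by
    intro v hv w hw hvw
    simp only [U, mem_filter, mem_erase] at hv hw
    rw [sqMon_mem_mixedCubics q hvw, sqfreeMon_mem_mixedCubics q hv.1.1.symm hw.1.1.symm hvw,
      pairCoeff_eq_neg_of_not_adj q hv.1.1.symm hv.2,
      pairCoeff_eq_neg_of_not_adj q hw.1.1.symm hw.2, hd, hd]
    -- `f u₀ v = f u₀ w = -e`, so `x_v² x_w` and `x_{u₀} x_v x_w` have coefficients
    -- `e + f v w` and `f v w - 2e`, which cannot both vanish.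
    by_contra! h
    have h3 : (3 : k) * e = 0 := by linear_combination h.1 - h.2
    exact he ((mul_eq_zero.1 h3).resolve_left (NeZero.ne 3))
  have hchoose : ∀ n, 4 ≤ n → n + 2 ≤ n.choose 2 := by
    intro n hn
    obtain ⟨m, rfl⟩ := Nat.exists_eq_add_of_le' hn
    rw [Nat.choose_two_right, Nat.le_div_iff_mul_le two_pos, show m + 4 - 1 = m + 3 by omega]
    nlinarith
  have := choose_two_le_card (by simp [U]) hpair
  have := (hchoose _ (by omega)).trans (Nat.choose_le_choose 2 hU)
  omega

lemma false_of_pairCoeff_self_eq_zero (hd : ∀ u, pairCoeff q u u = 0)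
    (hM : #(mixedCubics ((∑ t, X t) * q)) < Fintype.card ι)
    (hne : (mixedCubics ((∑ t, X t) * q)).Nonempty) : False := by
  by_cases h : ∃ p r, p ≠ r ∧ pairCoeff q p r ≠ 0
  · obtain ⟨p, r, hpr, hf⟩ := h
    have hr := pairCoeff_comm q r p
    refine (card_le_of_forall_sqMon_or hpr ?_ ?_ fun x hxp hxr => ?_).not_gt hM
    · simpa [sqMon_mem_mixedCubics q hpr, hd] using hf
    · simpa [sqMon_mem_mixedCubics q hpr.symm, hd, hr] using hf
    · rw [sqMon_mem_mixedCubics q (Ne.symm hxp), sqMon_mem_mixedCubics q (Ne.symm hxr),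
        sqfreeMon_mem_mixedCubics q hpr (Ne.symm hxp) (Ne.symm hxr), hd, hd]
      by_contra! h
      exact hf (by linear_combination h.2.2 - h.1 - h.2.1)
  · push Not at h
    refine hne.ne_empty (mixedCubics_eq_empty q fun u v => ?_)
    rcases eq_or_ne u v with rfl | huv
    exacts [hd u, h u v huv]

lemma forall_sqMon_mem_of_pairCoeff_self_ne [NeZero (2 : k)] [NeZero (3 : k)]
    (h4 : 4 ≤ Fintype.card ι) (hM : #(mixedCubics ((∑ t, X t) * q)) < Fintype.card ι)
    {t : ι} {e : k} (hd : ∀ v ≠ t, pairCoeff q v v = e) (ht : pairCoeff q t t ≠ e) :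
    ∀ v ≠ t, sqMon t v ∈ mixedCubics ((∑ t, X t) * q) := by
  have hadj : ∀ v ≠ t, (sqGraph (mixedCubics ((∑ t, X t) * q))).Adj t v :=
    fun v hv => sqGraph_adj_of_pairCoeff_ne q hv.symm (by rwa [hd v hv])
  have hstar := exists_eq_sqMon_of_forall_adj hM hadj
  have hsf : ∀ a b c, a ≠ b → a ≠ c → b ≠ c →
      pairCoeff q a b + pairCoeff q a c + pairCoeff q b c = 0 := by
    intro a b c hab hac hbc
    by_contra h
    obtain ⟨v, hv, h' | h'⟩ := hstar _ ((sqfreeMon_mem_mixedCubics q hab hac hbc).2 h)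
    exacts [sqMon_ne_sqfreeMon hv.symm hab hac hbc h'.symm,
      sqMon_ne_sqfreeMon hv hab hac hbc h'.symm]
  have hsq : ∀ a b, a ≠ t → b ≠ t → a ≠ b →
      pairCoeff q a a + pairCoeff q a b = 0 := by
    intro a b hat hbt hab
    by_contra h
    obtain ⟨v, -, h' | h'⟩ := hstar _ ((sqMon_mem_mixedCubics q hab).2 h)
    exacts [hat (sqMon_injective hab h').1, hbt (sqMon_injective hab h').2]
  intro v hv
  obtain ⟨-, h | h⟩ := sqGraph_adj.1 (hadj v hv)
  · exact h
  · refine absurd (diag_add_eq_zero_of_forall (pairCoeff_comm q) ?_ hsq hsf h4 hv)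
      ((sqMon_mem_mixedCubics q hv).1 h)
    intro a b ha hb
    rw [hd a ha, hd b hb]

theorem exists_forall_sqMon_mem_mixedCubics [NeZero (2 : k)] [NeZero (3 : k)]
    (h6 : 6 ≤ Fintype.card ι) (hM : #(mixedCubics ((∑ t, X t) * q)) < Fintype.card ι)
    (hne : (mixedCubics ((∑ t, X t) * q)).Nonempty) :
    ∃ t, ∀ v ≠ t, sqMon t v ∈ mixedCubics ((∑ t, X t) * q) := by
  obtain ⟨u₀, hu₀⟩ := exists_adj_subsingleton _ hM
  by_cases hconst : ∀ u, pairCoeff q u u = pairCoeff q u₀ u₀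
  · exfalso
    by_cases he : pairCoeff q u₀ u₀ = 0
    · exact false_of_pairCoeff_self_eq_zero q (fun u => (hconst u).trans he) hM hne
    · exact false_of_pairCoeff_self_eq q he hconst hu₀ h6 hM
  · obtain ⟨t, ht⟩ := not_forall.1 hconst
    refine ⟨t, forall_sqMon_mem_of_pairCoeff_self_ne q (by omega) hM (fun v hv => ?_) ht⟩
    by_contra hv'
    have hne : ∀ {w}, pairCoeff q w w ≠ pairCoeff q u₀ u₀ → u₀ ≠ w := by
      rintro w hw rfl; exact hw rfl
    exact hv (hu₀ v t (sqGraph_adj_of_pairCoeff_ne q (hne hv') (Ne.symm hv'))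
      (sqGraph_adj_of_pairCoeff_ne q (hne ht) (Ne.symm ht)))

end Polynomial

lemma exists_perm_image_sqMon {n : ℕ} (t : Fin (n + 1)) :
    ∃ σ : Equiv.Perm (Fin (n + 1)),
      (fun a => a ∘ σ) '' ((fun v => ⇑(sqMon t v)) '' {v | v ≠ t}) =
        Set.range (fun i : Fin n => fun s : Fin (n + 1) =>
          if s = 0 then 2 else if s = i.succ then (1 : ℕ) else 0) := by
  refine ⟨Equiv.swap 0 t, ?_⟩
  have hrow : ∀ i : Fin n, (fun s : Fin (n + 1) =>
      if s = 0 then 2 else if s = i.succ then (1 : ℕ) else 0) = ⇑(sqMon 0 i.succ) := by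
    intro i
    ext s
    rcases eq_or_ne s 0 with rfl | hs
    · simp [sqMon_apply, (Fin.succ_ne_zero i).symm]
    · simp [sqMon_apply, hs]
  simp only [Set.image_image, sqMon_comp_perm, Equiv.symm_swap, Equiv.swap_apply_right,
    funext hrow]
  ext a
  simp only [Set.mem_image, Set.mem_ofPred_eq, Set.mem_range]
  constructor
  · rintro ⟨v, hv, rfl⟩
    have h0 : Equiv.swap 0 t v ≠ 0 := by
      rwa [Ne, Equiv.swap_apply_eq_iff, Equiv.swap_apply_left]
    exact ⟨(Equiv.swap 0 t v).pred h0, by rw [Fin.succ_pred]⟩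
  · rintro ⟨i, rfl⟩
    refine ⟨Equiv.swap 0 t i.succ, ?_, by rw [Equiv.swap_apply_self]⟩
    rw [Ne, Equiv.swap_apply_eq_iff, Equiv.swap_apply_right]
    exact Fin.succ_ne_zero i

end Togliatti

open Togliatti

theorem stmt_18 (k : Type*) [Field k] [CharZero k] (n : ℕ) (hn : 5 ≤ n)
    (m : Fin n → Fin (n + 1) → ℕ) (hdeg : ∀ j, ∑ s, m j s = 3)
    (hinj : Function.Injective m)
    (hcube : ∀ j t, m j ≠ fun s => if s = t then 3 else 0)
    (hdep : ∃ (c : Fin (n + 1) → k) (b : Fin n → k), (c ≠ 0 ∨ b ≠ 0) ∧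
      (∑ t, c t • X t ^ 3) + (∑ j, b j • ∏ s, X s ^ m j s) ∈
        Ideal.span {(∑ t, X t : MvPolynomial (Fin (n + 1)) k)})
    (hmin : ∀ S : Finset (Fin n), S ≠ Finset.univ →
      ¬ ∃ (c : Fin (n + 1) → k) (b : Fin n → k),
        ((c ≠ 0 ∨ ∃ j ∈ S, b j ≠ 0) ∧ (∀ j ∉ S, b j = 0) ∧
          (∑ t, c t • X t ^ 3) + (∑ j, b j • ∏ s, X s ^ m j s) ∈
            Ideal.span {(∑ t, X t : MvPolynomial (Fin (n + 1)) k)})) :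
    ∃ σ : Equiv.Perm (Fin (n + 1)),
      (fun a => a ∘ σ) '' Set.range m =
        Set.range (fun t : Fin n => fun s : Fin (n + 1) =>
          if s = 0 then 2 else if s = t.succ then (1 : ℕ) else 0) := by
  obtain ⟨c, b, hcb, hmem⟩ := hdep
  obtain ⟨q, hq⟩ := Ideal.mem_span_singleton.1 hmem
  have hM := mixedCubics_eq_image c b m hinj hdeg hcube (forall_ne_zero_of_minimal hcb hmem hmin)
  rw [hq] at hM
  obtain ⟨t, ht⟩ := exists_forall_sqMon_mem_mixedCubics q (by rw [Fintype.card_fin]; omega)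
    (by rw [hM]; exact card_image_le.trans_lt (by simp))
    (by rw [hM]; exact univ_nonempty_iff.2 ⟨⟨0, by omega⟩⟩ |>.image _)
  rw [range_eq_image_sqMon m (by simp) (hM ▸ ht)]
  exact exists_perm_image_sqMon t
end
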